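/- arXiv:2111.08665 — 6 statements merged into one kernel-verified Lean document; each statement's English description precedes it below -/
import Mathlib

section
/- Let b ∈ {0,1}^n be a bit string with exactly μ·n ones. Sample k entries from b uniformly at random without replacement, obtaining Y_1,…,Y_k, and let Ȳ = (1/k)·∑_{i=1}^k Y_i. Then for any δ > 0, Pr[|Ȳ − μ| > δ] ≤ 2·exp(−2δ²·k·n/(n−k+1)). -/
open scoped Classical

lemma hoeffding_bernoulli (p : ℝ) (hp0 : 0 ≤ p) (hp1 : p ≤ 1) (c : ℝ) :
    p * Real.exp c + (1 - p) ≤ Real.exp (c * p + c ^ 2 / 8) := by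
  have hN : ∀ x : ℝ, 0 < p * Real.exp x + (1 - p) := by
    intro x
    rcases eq_or_lt_of_le hp0 with h | h
    · simp [← h]
    · have := Real.exp_pos x
      nlinarith
  set N : ℝ → ℝ := fun x => p * Real.exp x + (1 - p) with hNdef
  set g : ℝ → ℝ := fun x => x * p + x ^ 2 / 8 - Real.log (N x) with hgdef
  set h : ℝ → ℝ := fun x => p + x / 4 - p * Real.exp x / N x with hhdef
  have hNd : ∀ x, HasDerivAt N (p * Real.exp x) x := by
    intro x
    exact ((Real.hasDerivAt_exp x).const_mul p).add_const (1 - p)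
  have hgd : ∀ x, HasDerivAt g (h x) x := by
    intro x
    have h1 : HasDerivAt (fun x : ℝ => x * p + x ^ 2 / 8) (p + x / 4) x := by
      have := ((hasDerivAt_id x).mul_const p).add
        (((hasDerivAt_pow 2 x).div_const 8))
      refine this.congr_deriv ?_
      ring
    have h2 : HasDerivAt (fun x => Real.log (N x)) (p * Real.exp x / N x) x :=
      (hNd x).log (hN x).ne'
    exact h1.sub h2
  have hhd : ∀ x, HasDerivAt h (1 / 4 - p * (1 - p) * Real.exp x / (N x) ^ 2) x := by
    intro x
    have h1 : HasDerivAt (fun x : ℝ => p + x / 4) (1 / 4) x := by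
      simpa using ((hasDerivAt_id x).div_const 4).const_add p
    have h2 : HasDerivAt (fun x => p * Real.exp x / N x)
        ((p * Real.exp x * N x - p * Real.exp x * (p * Real.exp x)) / (N x) ^ 2) x :=
      (((Real.hasDerivAt_exp x).const_mul p)).div (hNd x) (hN x).ne'
    have heq : (p * Real.exp x * N x - p * Real.exp x * (p * Real.exp x)) / (N x) ^ 2
        = p * (1 - p) * Real.exp x / (N x) ^ 2 := by
      congr 1
      simp only [hNdef]
      ring
    rw [heq] at h2
    exact h1.sub h2
  have hhmono : Monotone h := by
    apply monotone_of_deriv_nonneg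
    · exact fun x => (hhd x).differentiableAt
    · intro x
      rw [(hhd x).deriv]
      have hE := Real.exp_pos x
      have key : 4 * (p * (1 - p) * Real.exp x) ≤ (p * Real.exp x + (1 - p)) ^ 2 := by
        nlinarith [sq_nonneg (p * Real.exp x - (1 - p))]
      have hN2 : (0:ℝ) < (N x) ^ 2 := pow_pos (hN x) 2
      rw [sub_nonneg, div_le_iff₀ hN2]
      show p * (1 - p) * Real.exp x ≤ 1 / 4 * (p * Real.exp x + (1 - p)) ^ 2
      linarith
  have hh0 : h 0 = 0 := by
    simp only [hhdef, hNdef]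
    simp
  have hg0 : g 0 = 0 := by
    simp only [hgdef, hNdef]
    norm_num
  have hgc : Continuous g := by
    have : Differentiable ℝ g := fun x => (hgd x).differentiableAt
    exact this.continuous
  have hmain : ∀ x : ℝ, 0 ≤ g x := by
    intro x
    rcases le_total 0 x with hx | hx
    · have : MonotoneOn g (Set.Ici 0) := by
        apply monotoneOn_of_deriv_nonneg (convex_Ici 0) hgc.continuousOn
        · intro y _
          exact (hgd y).differentiableAt.differentiableWithinAt
        · intro y hy
          rw [interior_Ici] at hy
          rw [(hgd y).deriv]
          have := hhmono (le_of_lt hy)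
          rw [hh0] at this
          exact this
      have := this (Set.self_mem_Ici) (Set.mem_Ici.mpr hx) hx
      rwa [hg0] at this
    · have : AntitoneOn g (Set.Iic 0) := by
        apply antitoneOn_of_deriv_nonpos (convex_Iic 0) hgc.continuousOn
        · intro y _
          exact (hgd y).differentiableAt.differentiableWithinAt
        · intro y hy
          rw [interior_Iic] at hy
          rw [(hgd y).deriv]
          have := hhmono (le_of_lt hy)
          rw [hh0] at this
          exact this
      have := this (Set.mem_Iic.mpr hx) (Set.self_mem_Iic) hx
      rwa [hg0] at this
  have := hmain c
  simp only [hgdef] at this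
  have hlog : Real.log (N c) ≤ c * p + c ^ 2 / 8 := by linarith
  calc p * Real.exp c + (1 - p) = N c := rfl
    _ = Real.exp (Real.log (N c)) := (Real.exp_log (hN c)).symm
    _ ≤ Real.exp (c * p + c ^ 2 / 8) := Real.exp_le_exp.mpr hlog

lemma serfling_sum_ineq (n : ℕ) :
    ∀ k : ℕ, 1 ≤ k → k + 1 ≤ n →
      (n : ℝ) * ((n : ℝ) - k) ^ 2 *
          (∑ j ∈ Finset.range k, 1 / ((n : ℝ) - j - 1) ^ 2)
        ≤ k * ((n : ℝ) - k + 1) := by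
  intro k
  induction k with
  | zero => intro h; omega
  | succ k ih =>
    intro _ hkn
    rcases Nat.eq_zero_or_pos k with rfl | hk1
    · -- base case k = 1
      have hn2 : 2 ≤ n := hkn
      have hn1 : (2:ℝ) ≤ (n:ℝ) := by exact_mod_cast hn2
      have hne : ((n:ℝ) - 1) ≠ 0 := by linarith
      simp only [zero_add, Finset.sum_range_one, Nat.cast_one, Nat.cast_zero]
      have h0 : (n:ℝ) - 0 - 1 = (n:ℝ) - 1 := by ring
      rw [h0]
      have h1 : (n:ℝ) * ((n:ℝ) - 1) ^ 2 * (1 / ((n:ℝ) - 1) ^ 2) = n := by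
        field_simp
      rw [h1]
      linarith
    · have hkn' : k + 1 ≤ n := by omega
      have IH := ih hk1 hkn'
      have hrk : ((k:ℝ)) + 2 ≤ (n:ℝ) := by exact_mod_cast hkn
      set r : ℝ := (n : ℝ) - k with hr
      have hr2 : (2:ℝ) ≤ r := by rw [hr]; linarith
      have hrpos : (0:ℝ) < r - 1 := by linarith
      have hr0 : (0:ℝ) < r := by linarith
      rw [Finset.sum_range_succ]
      have hcast : ((n:ℝ) - (k:ℕ) - 1) = r - 1 := by rw [hr]
      have hcast2 : ((n:ℝ) - ((k:ℕ)+1:ℕ)) = r - 1 := by push_cast; rw [hr]; ring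
      rw [hcast, hcast2]
      set T : ℝ := ∑ j ∈ Finset.range k, 1 / ((n : ℝ) - j - 1) ^ 2 with hT
      have hIH' : (n:ℝ) * r ^ 2 * T ≤ k * (r + 1) := by
        have : ((n:ℝ) - k + 1) = r + 1 := by rw [hr]
        rw [← this]; exact IH
      have hsq : (r - 1) ^ 2 * (1 / (r - 1) ^ 2) = 1 := by
        field_simp
      have expand : (n:ℝ) * (r - 1) ^ 2 * (T + 1 / (r - 1) ^ 2)
          = (n:ℝ) * (r - 1) ^ 2 * T + n := by
        have hne : r - 1 ≠ 0 := ne_of_gt hrpos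
        field_simp
      push_cast
      rw [expand]
      have hgoal2 : r - 1 + 1 = r := by ring
      rw [hgoal2]
      -- now goal : n (r-1)^2 T + n ≤ (k+1) r
      have h1 : (n:ℝ) * (r - 1) ^ 2 * T * r ^ 2 ≤ (r - 1) ^ 2 * ((k:ℝ) * (r + 1)) :=
        calc (n:ℝ) * (r - 1) ^ 2 * T * r ^ 2 = (r - 1) ^ 2 * ((n:ℝ) * r ^ 2 * T) := by ring
          _ ≤ (r - 1) ^ 2 * ((k:ℝ) * (r + 1)) :=
              mul_le_mul_of_nonneg_left hIH' (sq_nonneg (r - 1))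
      have hn : (n:ℝ) = k + r := by rw [hr]; ring
      have hkpos : (0:ℝ) ≤ (k:ℝ) := Nat.cast_nonneg k
      have hr2pos : (0:ℝ) < r ^ 2 := by positivity
      rw [← mul_le_mul_iff_of_pos_right hr2pos]
      calc ((n:ℝ) * (r - 1) ^ 2 * T + n) * r ^ 2
          = (n:ℝ) * (r - 1) ^ 2 * T * r ^ 2 + n * r ^ 2 := by ring
        _ ≤ (r - 1) ^ 2 * ((k:ℝ) * (r + 1)) + n * r ^ 2 := by linarith
        _ ≤ ((k:ℝ) + 1) * r * r ^ 2 := by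
            rw [hn]
            nlinarith [mul_nonneg hkpos (le_of_lt hrpos)]

lemma snoc_injective {n j : ℕ} (f : Fin j ↪ Fin n) (x : Fin n)
    (hx : x ∉ Finset.univ.map f) :
    Function.Injective (Fin.snoc (⇑f) x : Fin (j+1) → Fin n) := by
  have hxr : ∀ i, f i ≠ x := by
    intro i hi
    exact hx (Finset.mem_map.mpr ⟨i, Finset.mem_univ i, hi⟩)
  intro a b hab
  induction a using Fin.lastCases with
  | last =>
    induction b using Fin.lastCases with
    | last => rfl
    | cast b =>
      rw [Fin.snoc_last, Fin.snoc_castSucc] at hab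
      exact absurd hab.symm (hxr b)
  | cast a =>
    induction b using Fin.lastCases with
    | last =>
      rw [Fin.snoc_last, Fin.snoc_castSucc] at hab
      exact absurd hab (hxr a)
    | cast b =>
      rw [Fin.snoc_castSucc, Fin.snoc_castSucc] at hab
      rw [f.injective hab]

lemma snoc_restrict_eq {n j : ℕ} (g : Fin (j+1) ↪ Fin n) :
    (Fin.snoc (⇑(Fin.castSuccEmb.trans g)) (g (Fin.last j)) : Fin (j+1) → Fin n) = ⇑g := by
  funext i
  induction i using Fin.lastCases with
  | last => rw [Fin.snoc_last]
  | cast i => rw [Fin.snoc_castSucc]; rfl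

lemma sum_emb_succ {n j : ℕ} (G : (Fin (j+1) ↪ Fin n) → ℝ) :
    ∑ g : Fin (j+1) ↪ Fin n, G g
      = ∑ f : Fin j ↪ Fin n, ∑ x ∈ (Finset.univ.map f)ᶜ,
          if h : Function.Injective (Fin.snoc (⇑f) x : Fin (j+1) → Fin n)
          then G ⟨_, h⟩ else 0 := by
  have hstep : (∑ f : Fin j ↪ Fin n, ∑ x ∈ (Finset.univ.map f)ᶜ,
          if h : Function.Injective (Fin.snoc (⇑f) x : Fin (j+1) → Fin n)
          then G ⟨_, h⟩ else 0)
      = ∑ p ∈ (Finset.univ : Finset (Fin j ↪ Fin n)).sigma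
            (fun f => (Finset.univ.map f)ᶜ),
          if h : Function.Injective (Fin.snoc (⇑p.1) p.2 : Fin (j+1) → Fin n)
          then G ⟨_, h⟩ else 0 :=
    Finset.sum_sigma' _ _ _
  rw [hstep]
  refine Finset.sum_bij'
    (fun g _ => (⟨Fin.castSuccEmb.trans g, g (Fin.last j)⟩ :
      Σ _ : Fin j ↪ Fin n, Fin n))
    (fun p hp =>
      (⟨Fin.snoc (⇑p.1) p.2,
        snoc_injective p.1 p.2 (by simpa using (Finset.mem_sigma.mp hp).2)⟩ :
        Fin (j+1) ↪ Fin n))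
    ?_ ?_ ?_ ?_ ?_
  · -- membership forward
    intro g _
    refine Finset.mem_sigma.mpr ⟨Finset.mem_univ _, ?_⟩
    rw [Finset.mem_compl]
    intro hmem
    obtain ⟨i, _, hi⟩ := Finset.mem_map.mp hmem
    have hieq : (Fin.castSuccEmb.trans g) i = g i.castSucc := rfl
    rw [hieq] at hi
    have := g.injective hi
    exact (Fin.ne_last_of_lt (Fin.castSucc_lt_last i)) this
  · -- membership backward
    intro p _
    exact Finset.mem_univ _
  · -- left inverse
    intro g _
    exact Function.Embedding.ext fun i => congrFun (snoc_restrict_eq g) i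
  · -- right inverse
    intro p hp
    obtain ⟨f, x⟩ := p
    refine Sigma.ext (Function.Embedding.ext fun i => ?_) ?_
    · show (Fin.snoc (⇑f) x : Fin (j+1) → Fin n) i.castSucc = f i
      simp
    · show HEq ((Fin.snoc (⇑f) x : Fin (j+1) → Fin n) (Fin.last j)) x
      simp
  · -- values agree
    intro g _
    have hinj : Function.Injective
        (Fin.snoc (⇑(Fin.castSuccEmb.trans g)) (g (Fin.last j)) : Fin (j+1) → Fin n) := by
      rw [snoc_restrict_eq]
      exact g.injective
    rw [dif_pos hinj]
    congr 1
    apply Function.Embedding.ext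
    intro i
    show g i = (Fin.snoc (⇑(Fin.castSuccEmb.trans g)) (g (Fin.last j)) : Fin (j+1) → Fin n) i
    rw [snoc_restrict_eq]

lemma step_pointwise (n j : ℕ) (hj : j + 2 ≤ n) (b : Fin n → ℝ)
    (hb : ∀ i, b i = 0 ∨ b i = 1) (μ : ℝ) (hμ : ∑ i, b i = μ * n)
    (t : ℝ) (f : Fin j ↪ Fin n) :
    ∑ x ∈ (Finset.univ.map f)ᶜ,
        Real.exp (t * ((∑ i, b (f i)) + b x - ((j:ℝ)+1) * μ) / ((n:ℝ) - j - 1))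
      ≤ ((n:ℝ) - j) * Real.exp (t * ((∑ i, b (f i)) - j * μ) / ((n:ℝ) - j))
          * Real.exp (t^2 / (8 * ((n:ℝ) - j - 1)^2)) := by
  have hjn : (j:ℝ) + 2 ≤ (n:ℝ) := by exact_mod_cast hj
  set ρ : ℝ := (n:ℝ) - j with hρ
  have hρ2 : (2:ℝ) ≤ ρ := by rw [hρ]; linarith
  have hρ0 : (0:ℝ) < ρ := by linarith
  have hρ1 : (0:ℝ) < ρ - 1 := by linarith
  set s : ℝ := ∑ i, b (f i) with hs
  set R : Finset (Fin n) := (Finset.univ.map f)ᶜ with hR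
  set w : ℝ := ∑ x ∈ R, b x with hw
  have hcardR : (R.card : ℝ) = ρ := by
    have hcn : R.card = n - j := by
      rw [hR, Finset.card_compl, Finset.card_map, Finset.card_univ, Fintype.card_fin,
        Fintype.card_fin]
    rw [hcn, Nat.cast_sub (by omega)]
  have hsum_map : ∑ x ∈ Finset.univ.map f, b x = s := by
    rw [Finset.sum_map]
  have hws : w = μ * n - s := by
    have := Finset.sum_add_sum_compl (Finset.univ.map f) b
    rw [hsum_map, hμ] at this
    rw [hw, hR]
    linarith
  have hw0 : 0 ≤ w := by
    apply Finset.sum_nonneg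
    intro x _
    rcases hb x with h | h <;> rw [h] <;> norm_num
  have hw1 : w ≤ ρ := by
    rw [← hcardR]
    calc w ≤ ∑ _x ∈ R, (1:ℝ) := by
            apply Finset.sum_le_sum
            intro x _
            rcases hb x with h | h <;> rw [h] <;> norm_num
      _ = R.card := by rw [Finset.sum_const, nsmul_eq_mul, mul_one]
  set c : ℝ := t / (ρ - 1) with hc
  set A : ℝ := t * (s - ((j:ℝ)+1) * μ) / (ρ - 1) with hA
  -- rewrite each term
  have hterm : ∀ x ∈ R, Real.exp (t * (s + b x - ((j:ℝ)+1) * μ) / ((n:ℝ) - j - 1))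
      = Real.exp A * (b x * Real.exp c + (1 - b x)) := by
    intro x _
    have harg : t * (s + b x - ((j:ℝ)+1) * μ) / ((n:ℝ) - j - 1) = A + c * b x := by
      rw [hA, hc]
      have : (n:ℝ) - j - 1 = ρ - 1 := by rw [hρ]
      rw [this]
      field_simp
      try ring
    rw [harg, Real.exp_add]
    congr 1
    rcases hb x with h | h <;> rw [h] <;> simp
  rw [Finset.sum_congr rfl hterm]
  have hsum2 : ∑ x ∈ R, Real.exp A * (b x * Real.exp c + (1 - b x))
      = Real.exp A * (w * Real.exp c + (ρ - w)) := by
    rw [← Finset.mul_sum]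
    congr 1
    rw [Finset.sum_add_distrib, ← Finset.sum_mul, ← hw, Finset.sum_sub_distrib,
      Finset.sum_const, nsmul_eq_mul, mul_one, ← hw, hcardR]
  rw [hsum2]
  -- Hoeffding
  have hp0 : 0 ≤ w / ρ := div_nonneg hw0 (le_of_lt hρ0)
  have hp1 : w / ρ ≤ 1 := by rw [div_le_one hρ0]; exact hw1
  have hhoef := hoeffding_bernoulli (w / ρ) hp0 hp1 c
  have hkey : w * Real.exp c + (ρ - w) ≤ ρ * Real.exp (c * (w / ρ) + c^2/8) := by
    have := mul_le_mul_of_nonneg_left hhoef (le_of_lt hρ0)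
    calc w * Real.exp c + (ρ - w)
        = ρ * (w / ρ * Real.exp c + (1 - w / ρ)) := by field_simp; try ring
      _ ≤ ρ * Real.exp (c * (w / ρ) + c^2/8) := this
  calc Real.exp A * (w * Real.exp c + (ρ - w))
      ≤ Real.exp A * (ρ * Real.exp (c * (w / ρ) + c^2/8)) :=
        mul_le_mul_of_nonneg_left hkey (le_of_lt (Real.exp_pos A))
    _ = ρ * Real.exp (A + c * (w / ρ)) * Real.exp (c^2/8) := by
        rw [Real.exp_add, Real.exp_add]; ring
    _ = ((n:ℝ) - j) * Real.exp (t * (s - j * μ) / ρ) * Real.exp (t^2 / (8 * ((n:ℝ) - j - 1)^2)) := by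
        have h1 : A + c * (w / ρ) = t * (s - j * μ) / ρ := by
          rw [hA, hc, hws]
          have hn : (n:ℝ) = ρ + j := by rw [hρ]; ring
          rw [hn]
          field_simp
          try ring
        have h2 : c^2/8 = t^2 / (8 * ((n:ℝ) - j - 1)^2) := by
          have h3 : (n:ℝ) - j - 1 = ρ - 1 := by rw [hρ]
          rw [hc, h3, div_pow, div_div, mul_comm ((ρ-1)^2) 8]
        rw [h1, h2, hρ]

lemma mgf_bound (n : ℕ) (b : Fin n → ℝ) (hb : ∀ i, b i = 0 ∨ b i = 1)
    (μ : ℝ) (hμ : ∑ i, b i = μ * n) (t : ℝ) :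
    ∀ k : ℕ, k < n →
      ∑ f : Fin k ↪ Fin n, Real.exp (t * ((∑ i, b (f i)) - k * μ) / ((n:ℝ) - k))
        ≤ (n.descFactorial k : ℝ)
            * Real.exp (t^2/8 * ∑ j ∈ Finset.range k, 1/((n:ℝ)-j-1)^2) := by
  intro k
  induction k with
  | zero =>
    intro _
    have h1 : ∀ f : Fin 0 ↪ Fin n,
        Real.exp (t * ((∑ i, b (f i)) - (0:ℕ) * μ) / ((n:ℝ) - (0:ℕ))) = 1 := by
      intro f
      simp
    rw [Finset.sum_congr rfl (fun f _ => h1 f)]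
    simp
  | succ k ih =>
    intro hkn
    have hk2 : k + 2 ≤ n := by omega
    have IH := ih (by omega)
    -- decompose
    rw [sum_emb_succ (fun g => Real.exp (t * ((∑ i, b (g i)) - ((k+1:ℕ):ℝ) * μ)
      / ((n:ℝ) - ((k+1:ℕ):ℝ))))]
    have hinner : ∀ f : Fin k ↪ Fin n,
        (∑ x ∈ (Finset.univ.map f)ᶜ,
          if h : Function.Injective (Fin.snoc (⇑f) x : Fin (k+1) → Fin n)
          then Real.exp (t * ((∑ i, b ((⟨_, h⟩ : Fin (k+1) ↪ Fin n) i)) - ((k+1:ℕ):ℝ) * μ)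
            / ((n:ℝ) - ((k+1:ℕ):ℝ)))
          else 0)
        ≤ ((n:ℝ) - k) * Real.exp (t * ((∑ i, b (f i)) - k * μ) / ((n:ℝ) - k))
            * Real.exp (t^2 / (8 * ((n:ℝ) - k - 1)^2)) := by
      intro f
      have heq : ∀ x ∈ (Finset.univ.map f)ᶜ,
          (if h : Function.Injective (Fin.snoc (⇑f) x : Fin (k+1) → Fin n)
          then Real.exp (t * ((∑ i, b ((⟨_, h⟩ : Fin (k+1) ↪ Fin n) i)) - ((k+1:ℕ):ℝ) * μ)
            / ((n:ℝ) - ((k+1:ℕ):ℝ)))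
          else 0)
          = Real.exp (t * ((∑ i, b (f i)) + b x - ((k:ℝ)+1) * μ) / ((n:ℝ) - k - 1)) := by
        intro x hx
        rw [dif_pos (snoc_injective f x (by simpa using hx))]
        congr 1
        have hsum : (∑ i : Fin (k+1), b ((Fin.snoc (⇑f) x : Fin (k+1) → Fin n) i))
            = (∑ i, b (f i)) + b x := by
          rw [Fin.sum_univ_castSucc]
          simp
        simp only [Function.Embedding.coeFn_mk]
        push_cast
        rw [hsum]
        ring
      rw [Finset.sum_congr rfl heq]
      exact step_pointwise n k hk2 b hb μ hμ t f
    calc ∑ f : Fin k ↪ Fin n, (∑ x ∈ (Finset.univ.map f)ᶜ,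
          if h : Function.Injective (Fin.snoc (⇑f) x : Fin (k+1) → Fin n)
          then Real.exp (t * ((∑ i, b ((⟨_, h⟩ : Fin (k+1) ↪ Fin n) i)) - ((k+1:ℕ):ℝ) * μ)
            / ((n:ℝ) - ((k+1:ℕ):ℝ)))
          else 0)
        ≤ ∑ f : Fin k ↪ Fin n, ((n:ℝ) - k)
            * Real.exp (t * ((∑ i, b (f i)) - k * μ) / ((n:ℝ) - k))
            * Real.exp (t^2 / (8 * ((n:ℝ) - k - 1)^2)) :=
          Finset.sum_le_sum (fun f _ => hinner f)
      _ = ((n:ℝ) - k) * Real.exp (t^2 / (8 * ((n:ℝ) - k - 1)^2))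
            * ∑ f : Fin k ↪ Fin n,
                Real.exp (t * ((∑ i, b (f i)) - k * μ) / ((n:ℝ) - k)) := by
          rw [Finset.mul_sum]
          apply Finset.sum_congr rfl
          intro f _
          ring
      _ ≤ ((n:ℝ) - k) * Real.exp (t^2 / (8 * ((n:ℝ) - k - 1)^2))
            * ((n.descFactorial k : ℝ)
            * Real.exp (t^2/8 * ∑ j ∈ Finset.range k, 1/((n:ℝ)-j-1)^2)) := by
          apply mul_le_mul_of_nonneg_left IH
          have h1 : (0:ℝ) ≤ (n:ℝ) - k := by
            have : (k:ℝ) + 2 ≤ (n:ℝ) := by exact_mod_cast hk2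
            linarith
          positivity
      _ = (n.descFactorial (k+1) : ℝ)
            * Real.exp (t^2/8 * ∑ j ∈ Finset.range (k+1), 1/((n:ℝ)-j-1)^2) := by
          have hdf : (n.descFactorial (k+1) : ℝ) = ((n:ℝ) - k) * n.descFactorial k := by
            rw [Nat.descFactorial_succ]
            push_cast [Nat.cast_sub (show k ≤ n by omega)]
            ring
          have hexp : t^2/8 * ∑ j ∈ Finset.range (k+1), 1/((n:ℝ)-j-1)^2
              = t^2/8 * (∑ j ∈ Finset.range k, 1/((n:ℝ)-j-1)^2)
                + t^2/(8*((n:ℝ)-k-1)^2) := by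
            rw [Finset.sum_range_succ, mul_add]
            congr 1
            rw [mul_one_div, div_div]
          rw [hdf, hexp, Real.exp_add]
          ring

lemma serfling_one_sided (n k : ℕ) (hk : 0 < k) (hkn : k < n)
    (b : Fin n → ℝ) (hb : ∀ i, b i = 0 ∨ b i = 1)
    (μ : ℝ) (hμ : ∑ i, b i = μ * n) (δ : ℝ) (hδ : 0 < δ) :
    (((Finset.univ : Finset (Fin k ↪ Fin n)).filter
        (fun f => δ < (∑ i, b (f i)) / k - μ)).card : ℝ)
      ≤ (((Finset.univ : Finset (Fin k ↪ Fin n)).card : ℝ))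
          * Real.exp (-2 * δ ^ 2 * k * n / ((n : ℝ) - k + 1)) := by
  have hkr : (0:ℝ) < k := by exact_mod_cast hk
  have hknr : (k:ℝ) < n := by exact_mod_cast hkn
  have hnk : (0:ℝ) < (n:ℝ) - k := by linarith
  set T : ℝ := ∑ j ∈ Finset.range k, 1/((n:ℝ)-j-1)^2 with hT
  have hT0 : 0 < T := by
    rw [hT]
    apply Finset.sum_pos
    · intro j hj
      have hjk : j < k := Finset.mem_range.mp hj
      have hj2 : (j:ℝ) + 2 ≤ (n:ℝ) := by exact_mod_cast (show j + 2 ≤ n by omega)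
      have h1 : (0:ℝ) < (n:ℝ) - j - 1 := by linarith
      positivity
    · exact Finset.nonempty_range_iff.mpr (by omega)
  set t : ℝ := 4*k*δ/(((n:ℝ)-k)*T) with ht
  set a : ℝ := k*δ/((n:ℝ)-k) with ha
  have ha0 : 0 < a := by rw [ha]; positivity
  have ht0 : 0 < t := by rw [ht]; positivity
  have hD : (((Finset.univ : Finset (Fin k ↪ Fin n)).card : ℝ)) = (n.descFactorial k : ℝ) := by
    rw [Finset.card_univ, Fintype.card_embedding_eq, Fintype.card_fin, Fintype.card_fin]
  have hmgf := mgf_bound n b hb μ hμ t k hkn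
  rw [← hT] at hmgf
  set F : Finset (Fin k ↪ Fin n) := (Finset.univ : Finset (Fin k ↪ Fin n)).filter
      (fun f => δ < (∑ i, b (f i)) / k - μ) with hF
  have key1 : (F.card : ℝ) * Real.exp (t * a)
      ≤ ∑ f ∈ F, Real.exp (t * ((∑ i, b (f i)) - k * μ) / ((n:ℝ) - k)) := by
    have hterm : ∀ f ∈ F, Real.exp (t * a)
        ≤ Real.exp (t * ((∑ i, b (f i)) - k * μ) / ((n:ℝ) - k)) := by
      intro f hf
      have hf' : δ < (∑ i, b (f i)) / k - μ := (Finset.mem_filter.mp hf).2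
      apply Real.exp_le_exp.mpr
      have h2 : (δ + μ) * k < (∑ i, b (f i)) :=
        (lt_div_iff₀ hkr).mp (show δ + μ < (∑ i, b (f i)) / k by linarith)
      have hs : (k:ℝ) * δ ≤ (∑ i, b (f i)) - k * μ := by nlinarith
      have hdiv : a ≤ ((∑ i, b (f i)) - k * μ) / ((n:ℝ) - k) := by
        rw [ha]
        exact (div_le_div_iff_of_pos_right hnk).mpr hs
      calc t * a ≤ t * (((∑ i, b (f i)) - k * μ) / ((n:ℝ) - k)) :=
            mul_le_mul_of_nonneg_left hdiv ht0.le
        _ = t * ((∑ i, b (f i)) - k * μ) / ((n:ℝ) - k) := by ring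
    have := Finset.card_nsmul_le_sum F
      (fun f => Real.exp (t * ((∑ i, b (f i)) - k * μ) / ((n:ℝ) - k)))
      (Real.exp (t * a)) hterm
    rwa [nsmul_eq_mul] at this
  have key2 : ∑ f ∈ F, Real.exp (t * ((∑ i, b (f i)) - k * μ) / ((n:ℝ) - k))
      ≤ ∑ f : Fin k ↪ Fin n, Real.exp (t * ((∑ i, b (f i)) - k * μ) / ((n:ℝ) - k)) :=
    Finset.sum_le_sum_of_subset_of_nonneg (Finset.filter_subset _ _)
      (fun f _ _ => (Real.exp_pos _).le)
  have hchain : (F.card : ℝ) * Real.exp (t * a)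
      ≤ (n.descFactorial k : ℝ) * Real.exp (t^2/8 * T) :=
    le_trans key1 (le_trans key2 hmgf)
  have hcard : (F.card : ℝ) ≤ (n.descFactorial k : ℝ) * Real.exp (t^2/8 * T - t * a) := by
    have hE : (0:ℝ) < Real.exp (t * a) := Real.exp_pos _
    rw [Real.exp_sub, ← mul_div_assoc]
    rw [le_div_iff₀ hE]
    exact hchain
  have harg : t^2/8 * T - t * a = -(2*k^2*δ^2/((((n:ℝ)-k)^2)*T)) := by
    rw [ht, ha]
    field_simp
    ring
  have hstar := serfling_sum_ineq n k hk (by omega)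
  rw [← hT] at hstar
  have hexp_le : t^2/8 * T - t * a ≤ -2 * δ ^ 2 * k * n / ((n : ℝ) - k + 1) := by
    rw [harg]
    have h1 : -2 * δ ^ 2 * (k:ℝ) * n / ((n : ℝ) - k + 1)
        = -(2 * δ ^ 2 * (k:ℝ) * n / ((n : ℝ) - k + 1)) := by ring
    rw [h1, neg_le_neg_iff]
    have hd1 : (0:ℝ) < (n:ℝ) - k + 1 := by linarith
    have hd2 : (0:ℝ) < ((n:ℝ) - k)^2 * T := by positivity
    rw [div_le_div_iff₀ hd1 hd2]
    have := mul_le_mul_of_nonneg_left hstar (show (0:ℝ) ≤ 2 * δ^2 * k by positivity)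
    nlinarith
  calc (F.card : ℝ)
      ≤ (n.descFactorial k : ℝ) * Real.exp (t^2/8 * T - t * a) := hcard
    _ ≤ (n.descFactorial k : ℝ) * Real.exp (-2 * δ ^ 2 * k * n / ((n : ℝ) - k + 1)) :=
        mul_le_mul_of_nonneg_left (Real.exp_le_exp.mpr hexp_le) (Nat.cast_nonneg _)
    _ = (((Finset.univ : Finset (Fin k ↪ Fin n)).card : ℝ))
          * Real.exp (-2 * δ ^ 2 * k * n / ((n : ℝ) - k + 1)) := by rw [hD]

/-- Serfling's inequality (two-sided), sampling without replacement:
`b : Fin n → ℝ` is a bit string with `∑ b i = μ·n`; sampling `k` entries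
without replacement is modeled by a uniformly random embedding `f : Fin k ↪ Fin n`. -/
theorem serfling_inequality (n k : ℕ) (hk : 0 < k) (hkn : k ≤ n)
    (b : Fin n → ℝ) (hb : ∀ i, b i = 0 ∨ b i = 1)
    (μ : ℝ) (hμ : ∑ i, b i = μ * n)
    (δ : ℝ) (hδ : 0 < δ) :
    (((Finset.univ : Finset (Fin k ↪ Fin n)).filter
        (fun f => δ < |(∑ i, b (f i)) / k - μ|)).card : ℝ)
      / ((Finset.univ : Finset (Fin k ↪ Fin n)).card : ℝ)
      ≤ 2 * Real.exp (-2 * δ ^ 2 * k * n / ((n : ℝ) - k + 1)) := by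

  rcases eq_or_lt_of_le hkn with rfl | hkn'
  · -- k = n : the filter is empty
    have hempty : ((Finset.univ : Finset (Fin k ↪ Fin k)).filter
        (fun f => δ < |(∑ i, b (f i)) / k - μ|)) = ∅ := by
      apply Finset.filter_eq_empty_iff.mpr
      intro f _
      have hbij : Function.Bijective (⇑f) :=
        (Finite.injective_iff_bijective).mp f.injective
      have hsum : ∑ i, b (f i) = ∑ i, b i :=
        Fintype.sum_bijective (⇑f) hbij (fun i => b (f i)) b (fun _ => rfl)
      rw [hsum, hμ]
      have hk0 : (k:ℝ) ≠ 0 := by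
        have : (0:ℝ) < k := by exact_mod_cast hk
        linarith
      rw [mul_div_assoc, div_self hk0, mul_one, sub_self, abs_zero]
      linarith
    rw [hempty]
    simp only [Finset.card_empty, Nat.cast_zero, zero_div]
    positivity
  · -- k < n
    have hkr : (0:ℝ) < k := by exact_mod_cast hk
    set b' : Fin n → ℝ := fun i => 1 - b i with hb'def
    have hb' : ∀ i, b' i = 0 ∨ b' i = 1 := by
      intro i
      rcases hb i with h | h
      · right; rw [hb'def]; simp [h]
      · left; rw [hb'def]; simp [h]
    have hμ' : ∑ i, b' i = (1 - μ) * n := by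
      rw [hb'def]
      rw [Finset.sum_sub_distrib, hμ, Finset.sum_const, Finset.card_univ, Fintype.card_fin,
        nsmul_eq_mul, mul_one]
      ring
    have h1 := serfling_one_sided n k hk hkn' b hb μ hμ δ hδ
    have h2 := serfling_one_sided n k hk hkn' b' hb' (1 - μ) hμ' δ hδ
    have hflip : ∀ f : Fin k ↪ Fin n,
        (∑ i, b' (f i)) / k - (1 - μ) = -((∑ i, b (f i)) / k - μ) := by
      intro f
      have hsum : ∑ i, b' (f i) = (k:ℝ) - ∑ i, b (f i) := by
        rw [hb'def]
        rw [Finset.sum_sub_distrib, Finset.sum_const, Finset.card_univ, Fintype.card_fin,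
          nsmul_eq_mul, mul_one]
      rw [hsum]
      field_simp
      ring
    have hsubset : ((Finset.univ : Finset (Fin k ↪ Fin n)).filter
          (fun f => δ < |(∑ i, b (f i)) / k - μ|))
        ⊆ ((Finset.univ : Finset (Fin k ↪ Fin n)).filter
            (fun f => δ < (∑ i, b (f i)) / k - μ))
          ∪ ((Finset.univ : Finset (Fin k ↪ Fin n)).filter
            (fun f => δ < (∑ i, b' (f i)) / k - (1 - μ))) := by
      intro f hf
      have hf' : δ < |(∑ i, b (f i)) / k - μ| := (Finset.mem_filter.mp hf).2
      rcases lt_abs.mp hf' with h | h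
      · exact Finset.mem_union_left _ (Finset.mem_filter.mpr ⟨Finset.mem_univ _, h⟩)
      · refine Finset.mem_union_right _ (Finset.mem_filter.mpr ⟨Finset.mem_univ _, ?_⟩)
        rw [hflip f]
        exact h
    have hcard : (((Finset.univ : Finset (Fin k ↪ Fin n)).filter
          (fun f => δ < |(∑ i, b (f i)) / k - μ|)).card : ℝ)
        ≤ (((Finset.univ : Finset (Fin k ↪ Fin n)).filter
            (fun f => δ < (∑ i, b (f i)) / k - μ)).card : ℝ)
          + (((Finset.univ : Finset (Fin k ↪ Fin n)).filter
            (fun f => δ < (∑ i, b' (f i)) / k - (1 - μ))).card : ℝ) := by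
      have := le_trans (Finset.card_le_card hsubset) (Finset.card_union_le _ _)
      exact_mod_cast this
    have hCpos : (0:ℝ) < ((Finset.univ : Finset (Fin k ↪ Fin n)).card : ℝ) := by
      rw [Finset.card_univ, Fintype.card_embedding_eq, Fintype.card_fin, Fintype.card_fin]
      have : 0 < n.descFactorial k := by
        rcases Nat.eq_zero_or_pos (n.descFactorial k) with h | h
        · exact absurd (Nat.descFactorial_eq_zero_iff_lt.mp h) (by omega)
        · exact h
      exact_mod_cast this
    rw [div_le_iff₀ hCpos]
    calc (((Finset.univ : Finset (Fin k ↪ Fin n)).filter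
          (fun f => δ < |(∑ i, b (f i)) / k - μ|)).card : ℝ)
        ≤ _ + _ := hcard
      _ ≤ ((Finset.univ : Finset (Fin k ↪ Fin n)).card : ℝ)
            * Real.exp (-2 * δ ^ 2 * k * n / ((n : ℝ) - k + 1))
          + ((Finset.univ : Finset (Fin k ↪ Fin n)).card : ℝ)
            * Real.exp (-2 * δ ^ 2 * k * n / ((n : ℝ) - k + 1)) := add_le_add h1 h2
      _ = 2 * Real.exp (-2 * δ ^ 2 * k * n / ((n : ℝ) - k + 1))
            * ((Finset.univ : Finset (Fin k ↪ Fin n)).card : ℝ) := by ring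
end

section
/- Let C be a finite set, {Π_i}_{i∈C} orthogonal projectors on a Hilbert space H, and |ψ⟩ ∈ H a unit vector. Define α := (1/|C|)·∑_{i∈C} ‖Π_i|ψ⟩‖² and β := (1/|C|²)·∑_{i,j∈C} ‖Π_i Π_j |ψ⟩‖². Then β ≥ α³. -/
/-- Unruh's rewinding lemma: for orthogonal projectors `P i` (`i ∈ C`) on a Hilbert
space and a unit vector `ψ`, with `α = (1/|C|)·∑ᵢ ‖Pᵢ ψ‖²` and
`β = (1/|C|²)·∑ᵢⱼ ‖Pᵢ Pⱼ ψ‖²`, we have `β ≥ α³`. -/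
theorem unruh_rewinding {H : Type*} [NormedAddCommGroup H] [InnerProductSpace ℂ H]
    {C : Type*} [Fintype C] [Nonempty C]
    (P : C → H →ₗ[ℂ] H)
    (hidem : ∀ i, P i ∘ₗ P i = P i)
    (hsa : ∀ i, ∀ x y : H, (inner ℂ (P i x) y : ℂ) = inner ℂ x (P i y))
    (ψ : H) (hψ : ‖ψ‖ = 1)
    (α β : ℝ)
    (hα : α = (1 / (Fintype.card C : ℝ)) * ∑ i, ‖P i ψ‖ ^ 2)
    (hβ : β = (1 / (Fintype.card C : ℝ) ^ 2) * ∑ i, ∑ j, ‖P i (P j ψ)‖ ^ 2) :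
    α ^ 3 ≤ β := by
  classical
  have hn0 : (0:ℝ) < (Fintype.card C : ℝ) := by exact_mod_cast Fintype.card_pos
  set n : ℝ := (Fintype.card C : ℝ) with hndef
  set φ : C → H := fun i => P i ψ with hφdef
  set p : C → ℝ := fun i => ‖φ i‖ ^ 2 with hpdef
  set S : ℝ := ∑ i, p i with hSdef
  have hp0 : ∀ i, 0 ≤ p i := fun i => by positivity
  have hS0 : 0 ≤ S := Finset.sum_nonneg fun i _ => hp0 i
  have hPφ : ∀ i, P i (φ i) = φ i := by
    intro i
    have h := congrArg (fun L : H →ₗ[ℂ] H => L ψ) (hidem i)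
    simpa [hφdef] using h
  have hproj : ∀ i (x : H), (inner ℂ (φ i) (P i x) : ℂ) = inner ℂ (φ i) x := by
    intro i x
    rw [← hsa i (φ i) x, hPφ]
  have hpzero : ∀ i, p i = 0 → φ i = 0 := by
    intro i h
    simpa [hpdef] using h
  -- r i j : real part of ⟨φ i, φ j⟩
  set r : C → C → ℝ := fun i j => (inner ℂ (φ i) (φ j) : ℂ).re with hrdef
  -- R = ‖Φ‖²
  set Φ : H := ∑ i, φ i with hΦdef
  have hR : ∑ i, ∑ j, r i j = ‖Φ‖ ^ 2 := by
    have h1 : (inner ℂ Φ Φ : ℂ) = ∑ i, ∑ j, (inner ℂ (φ i) (φ j) : ℂ) := by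
      rw [hΦdef, sum_inner]
      exact Finset.sum_congr rfl fun i _ => by rw [inner_sum]
    have h2 : ((inner ℂ Φ Φ : ℂ)).re = ‖Φ‖ ^ 2 := by
      rw [inner_self_eq_norm_sq_to_K]; norm_cast
    rw [← h2, h1]
    simp [hrdef, Complex.re_sum]
  -- S ≤ ‖Φ‖
  have hinnerψ : ∀ i, (inner ℂ ψ (φ i) : ℂ) = (p i : ℂ) := by
    intro i
    calc (inner ℂ ψ (φ i) : ℂ) = inner ℂ ψ (P i (φ i)) := by rw [hPφ]
    _ = inner ℂ (P i ψ) (φ i) := (hsa i ψ (φ i)).symm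
    _ = inner ℂ (φ i) (φ i) := rfl
    _ = (‖φ i‖ : ℂ) ^ 2 := inner_self_eq_norm_sq_to_K (φ i)
    _ = ((p i : ℝ) : ℂ) := by rw [hpdef]; push_cast; ring
  have hSΦ : S ≤ ‖Φ‖ := by
    have h1 : (inner ℂ ψ Φ : ℂ) = (S : ℂ) := by
      rw [hΦdef, inner_sum]
      rw [hSdef]
      push_cast
      exact Finset.sum_congr rfl fun i _ => hinnerψ i
    have h2 : ‖(inner ℂ ψ Φ : ℂ)‖ ≤ ‖ψ‖ * ‖Φ‖ := norm_inner_le_norm ψ Φ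
    rw [h1, hψ, one_mul] at h2
    calc S ≤ |S| := le_abs_self S
    _ = ‖(S:ℂ)‖ := by simp [Complex.norm_real]
    _ ≤ ‖Φ‖ := h2
  have hSR : S ^ 2 ≤ ∑ i, ∑ j, r i j := by
    rw [hR]
    exact pow_le_pow_left₀ hS0 hSΦ 2
  -- Cauchy–Schwarz over pairs
  set q : C → C → ℝ := fun i j => if p i = 0 then 0 else r i j ^ 2 / p i with hqdef
  set Q : ℝ := ∑ i, ∑ j, q i j with hQdef
  have hCS : (∑ i, ∑ j, r i j) ^ 2 ≤ Q * (n * S) := by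
    have key := Finset.sum_mul_sq_le_sq_mul_sq Finset.univ
      (fun x : C × C => if p x.1 = 0 then 0 else r x.1 x.2 / Real.sqrt (p x.1))
      (fun x : C × C => Real.sqrt (p x.1))
    have e1 : ∑ x : C × C, (if p x.1 = 0 then 0 else r x.1 x.2 / Real.sqrt (p x.1)) * Real.sqrt (p x.1)
        = ∑ i, ∑ j, r i j := by
      rw [Fintype.sum_prod_type]
      refine Finset.sum_congr rfl fun i _ => Finset.sum_congr rfl fun j _ => ?_
      by_cases h : p i = 0
      · simp [h, hrdef, hpzero i h]
      · rw [if_neg h, div_mul_cancel₀ _ (Real.sqrt_ne_zero'.mpr (lt_of_le_of_ne (hp0 i) (Ne.symm h)))]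
    have e2 : ∑ x : C × C, (if p x.1 = 0 then 0 else r x.1 x.2 / Real.sqrt (p x.1)) ^ 2 = Q := by
      rw [hQdef, Fintype.sum_prod_type]
      refine Finset.sum_congr rfl fun i _ => Finset.sum_congr rfl fun j _ => ?_
      by_cases h : p i = 0
      · simp [hqdef, h]
      · rw [hqdef]
        simp only [h, if_false]
        rw [div_pow, Real.sq_sqrt (hp0 i)]
    have e3 : ∑ x : C × C, Real.sqrt (p x.1) ^ 2 = n * S := by
      rw [Fintype.sum_prod_type]
      have : ∀ i : C, ∑ _j : C, Real.sqrt (p i) ^ 2 = n * p i := by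
        intro i
        rw [Finset.sum_const, Real.sq_sqrt (hp0 i)]
        simp [hndef, mul_comm]
      rw [Finset.sum_congr rfl fun i _ => this i, ← Finset.mul_sum, hSdef]
    rw [e1, e2, e3] at key
    exact key
  -- q bounded by the norms
  have hqB : Q ≤ ∑ i, ∑ j, ‖P i (φ j)‖ ^ 2 := by
    rw [hQdef]
    refine Finset.sum_le_sum fun i _ => Finset.sum_le_sum fun j _ => ?_
    by_cases h : p i = 0
    · simp only [hqdef, h, if_true]
      positivity
    · simp only [hqdef, h, if_false]
      rw [div_le_iff₀ (lt_of_le_of_ne (hp0 i) (Ne.symm h))]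
      have h1 : ‖(inner ℂ (φ i) (φ j) : ℂ)‖ ≤ ‖φ i‖ * ‖P i (φ j)‖ := by
        rw [← hproj i (φ j)]
        exact norm_inner_le_norm _ _
      have h2 : |r i j| ≤ ‖(inner ℂ (φ i) (φ j) : ℂ)‖ := Complex.abs_re_le_norm _
      have h3 : r i j ^ 2 ≤ (‖φ i‖ * ‖P i (φ j)‖) ^ 2 := by
        rw [← sq_abs]
        exact pow_le_pow_left₀ (abs_nonneg _) (h2.trans h1) 2
      calc r i j ^ 2 ≤ (‖φ i‖ * ‖P i (φ j)‖) ^ 2 := h3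
      _ = ‖P i (φ j)‖ ^ 2 * p i := by rw [hpdef]; ring
  -- finish
  have hβ' : β = (1 / n ^ 2) * ∑ i, ∑ j, ‖P i (φ j)‖ ^ 2 := by rw [hβ]
  have hα' : α = S / n := by rw [hα]; rw [hSdef]; ring
  have hβpos : 0 ≤ ∑ i, ∑ j, ‖P i (φ j)‖ ^ 2 :=
    Finset.sum_nonneg fun i _ => Finset.sum_nonneg fun j _ => by positivity
  rcases eq_or_lt_of_le hS0 with hS | hS
  · have : α = 0 := by rw [hα', ← hS]; simp
    rw [this, hβ']
    have h0 : (0:ℝ) ^ 3 = 0 := by norm_num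
    rw [h0]
    exact mul_nonneg (by positivity) hβpos
  · -- S > 0
    have hQS : S ^ 3 / n ≤ Q := by
      have h4 : S ^ 4 ≤ Q * (n * S) := by
        calc S ^ 4 = (S ^ 2) ^ 2 := by ring
        _ ≤ (∑ i, ∑ j, r i j) ^ 2 := by
            apply pow_le_pow_left₀ (by positivity) hSR
        _ ≤ Q * (n * S) := hCS
      rw [div_le_iff₀ hn0]
      nlinarith [hS, hn0]
    rw [hα', hβ']
    rw [div_pow]
    rw [div_le_iff₀ (by positivity : (0:ℝ) < n ^ 3)]
    have : Q ≤ ∑ i, ∑ j, ‖P i (φ j)‖ ^ 2 := hqB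
    have hfin : S ^ 3 ≤ Q * n := by
      have := hQS
      rw [div_le_iff₀ hn0] at this
      linarith
    calc S ^ 3 ≤ Q * n := hfin
    _ ≤ (∑ i, ∑ j, ‖P i (φ j)‖ ^ 2) * n := by nlinarith [hn0]
    _ = 1 / n ^ 2 * (∑ i, ∑ j, ‖P i (φ j)‖ ^ 2) * n ^ 3 := by field_simp
end

section
/- Let C be a finite set and {Π_i}_{i∈C} orthogonal projectors on a Hilbert space H. Suppose an extraction procedure on input a unit vector |ψ⟩ picks (i,j) uniformly from C², outputs Fail if (i,j) ∉ S (for a fixed subset S ⊆ C²), otherwise measures {Π_j, I−Π_j} then {Π_i, I−Π_i}, outputting Fail if either measurement rejects, and otherwise succeeds. Then the success probability is at least ((1/|C|)·∑_{i∈C} ‖Π_i|ψ⟩‖²)³ − (1 − |S|/|C|²). -/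
open scoped InnerProductSpace

section AuxProjection

variable {H : Type*} [NormedAddCommGroup H] [InnerProductSpace ℂ H]

lemma proj_inner_right (P : H →ₗ[ℂ] H) (hid : P ∘ₗ P = P)
    (hsa : ∀ x y : H, (inner ℂ (P x) y : ℂ) = inner ℂ x (P y)) (x y : H) :
    (inner ℂ (P x) y : ℂ) = inner ℂ (P x) (P y) := by
  have h2 : P (P x) = P x := by
    have := congrArg (fun f => f x) hid
    simpa [LinearMap.comp_apply] using this
  calc (inner ℂ (P x) y : ℂ) = inner ℂ (P (P x)) y := by rw [h2]
    _ = inner ℂ (P x) (P y) := hsa (P x) y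

lemma proj_norm_le (P : H →ₗ[ℂ] H) (hid : P ∘ₗ P = P)
    (hsa : ∀ x y : H, (inner ℂ (P x) y : ℂ) = inner ℂ x (P y)) (x : H) :
    ‖P x‖ ≤ ‖x‖ := by
  have h1 : (‖P x‖ : ℝ) ^ 2 = RCLike.re (inner ℂ (P x) (P x) : ℂ) :=
    (inner_self_eq_norm_sq (P x)).symm
  have h2 : (inner ℂ (P x) (P x) : ℂ) = inner ℂ (P x) x := by
    rw [(proj_inner_right P hid hsa x x).symm]
  have h3 : ‖P x‖ ^ 2 ≤ ‖P x‖ * ‖x‖ := by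
    rw [h1, h2]
    calc RCLike.re (inner ℂ (P x) x : ℂ) ≤ ‖(inner ℂ (P x) x : ℂ)‖ := RCLike.re_le_norm _
      _ ≤ ‖P x‖ * ‖x‖ := norm_inner_le_norm _ _
  rcases eq_or_lt_of_le (norm_nonneg (P x)) with h | h
  · rw [← h]; exact norm_nonneg x
  · nlinarith

/-- Unruh's rewinding lemma in un-normalized form:
`(∑ᵢ ‖Pᵢψ‖²)³ ≤ |C| · ∑ᵢⱼ ‖Pᵢ Pⱼ ψ‖²` for a unit vector `ψ`. -/
lemma unruh_core {C : Type*} [Fintype C] (P : C → H →ₗ[ℂ] H)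
    (hidem : ∀ i, P i ∘ₗ P i = P i)
    (hsa : ∀ i, ∀ x y : H, (inner ℂ (P i x) y : ℂ) = inner ℂ x (P i y))
    (ψ : H) (hψ : ‖ψ‖ = 1) :
    (∑ i, ‖P i ψ‖ ^ 2) ^ 3 ≤ (Fintype.card C : ℝ) * ∑ i, ∑ j, ‖P i (P j ψ)‖ ^ 2 := by
  classical
  set F : ℝ := ∑ i, ‖P i ψ‖ ^ 2 with hF
  set T : ℝ := ∑ i, ∑ j, ‖P i (P j ψ)‖ ^ 2 with hT
  set w : H := ∑ i, P i ψ with hw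
  set n : ℝ := (Fintype.card C : ℝ) with hn
  have hF0 : 0 ≤ F := Finset.sum_nonneg fun i _ => by positivity
  have hT0 : 0 ≤ T := Finset.sum_nonneg fun i _ => Finset.sum_nonneg fun j _ => by positivity
  have hn0 : 0 ≤ n := Nat.cast_nonneg _
  -- inner ℂ (P i ψ) ψ = ‖P i ψ‖²
  have hip : ∀ i, (inner ℂ (P i ψ) ψ : ℂ) = ((‖P i ψ‖ ^ 2 : ℝ) : ℂ) := by
    intro i
    rw [proj_inner_right (P i) (hidem i) (hsa i) ψ ψ, inner_self_eq_norm_sq_to_K]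
    norm_cast
  have hwψ : (inner ℂ w ψ : ℂ) = ((F : ℝ) : ℂ) := by
    rw [hw, sum_inner]
    rw [hF]; push_cast
    refine Finset.sum_congr rfl fun i _ => ?_
    rw [hip i]; norm_cast
  have hFw : F ≤ ‖w‖ := by
    have : ‖(inner ℂ w ψ : ℂ)‖ ≤ ‖w‖ * ‖ψ‖ := norm_inner_le_norm _ _
    rw [hwψ, hψ, mul_one] at this
    rwa [Complex.norm_real, Real.norm_eq_abs, abs_of_nonneg hF0] at this
  -- Step A: per-column Cauchy–Schwarz
  have stepA : ∀ j, ‖(inner ℂ w (P j ψ) : ℂ)‖ ^ 2 ≤ F * ∑ i, ‖P i (P j ψ)‖ ^ 2 := by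
    intro j
    have h1 : ‖(inner ℂ w (P j ψ) : ℂ)‖ ≤ ∑ i, ‖P i ψ‖ * ‖P i (P j ψ)‖ := by
      rw [hw, sum_inner]
      refine (norm_sum_le _ _).trans (Finset.sum_le_sum fun i _ => ?_)
      rw [proj_inner_right (P i) (hidem i) (hsa i) ψ (P j ψ)]
      exact norm_inner_le_norm _ _
    have h2 : (∑ i, ‖P i ψ‖ * ‖P i (P j ψ)‖) ^ 2
        ≤ (∑ i, ‖P i ψ‖ ^ 2) * ∑ i, ‖P i (P j ψ)‖ ^ 2 :=
      Finset.sum_mul_sq_le_sq_mul_sq _ _ _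
    calc ‖(inner ℂ w (P j ψ) : ℂ)‖ ^ 2 ≤ (∑ i, ‖P i ψ‖ * ‖P i (P j ψ)‖) ^ 2 := by
          apply pow_le_pow_left₀ (norm_nonneg _) h1
      _ ≤ F * ∑ i, ‖P i (P j ψ)‖ ^ 2 := h2
  -- Step B: Jensen
  have hww : ‖w‖ ^ 2 = ∑ j, RCLike.re (inner ℂ w (P j ψ) : ℂ) := by
    rw [← inner_self_eq_norm_sq (𝕜 := ℂ) w]
    conv_lhs => rw [hw]
    rw [inner_sum, map_sum]
  have stepB : ‖w‖ ^ 4 ≤ n * ∑ j, ‖(inner ℂ w (P j ψ) : ℂ)‖ ^ 2 := by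
    have h1 : (∑ j, RCLike.re (inner ℂ w (P j ψ) : ℂ)) ^ 2
        ≤ (Fintype.card C : ℝ) * ∑ j, (RCLike.re (inner ℂ w (P j ψ) : ℂ)) ^ 2 := by
      simpa using sq_sum_le_card_mul_sum_sq
        (s := (Finset.univ : Finset C)) (f := fun j => RCLike.re (inner ℂ w (P j ψ) : ℂ))
    have h2 : ∑ j, (RCLike.re (inner ℂ w (P j ψ) : ℂ)) ^ 2
        ≤ ∑ j, ‖(inner ℂ w (P j ψ) : ℂ)‖ ^ 2 := by
      refine Finset.sum_le_sum fun j _ => ?_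
      have := RCLike.abs_re_le_norm (inner ℂ w (P j ψ) : ℂ)
      nlinarith [abs_nonneg (RCLike.re (inner ℂ w (P j ψ) : ℂ)),
        sq_abs (RCLike.re (inner ℂ w (P j ψ) : ℂ))]
    calc ‖w‖ ^ 4 = (‖w‖ ^ 2) ^ 2 := by ring
      _ = (∑ j, RCLike.re (inner ℂ w (P j ψ) : ℂ)) ^ 2 := by rw [hww]
      _ ≤ n * ∑ j, (RCLike.re (inner ℂ w (P j ψ) : ℂ)) ^ 2 := h1
      _ ≤ n * ∑ j, ‖(inner ℂ w (P j ψ) : ℂ)‖ ^ 2 := by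
          exact mul_le_mul_of_nonneg_left h2 hn0
  -- combine
  have key : F ^ 4 ≤ n * (F * T) := by
    have h1 : ∑ j, ‖(inner ℂ w (P j ψ) : ℂ)‖ ^ 2 ≤ F * T := by
      calc ∑ j, ‖(inner ℂ w (P j ψ) : ℂ)‖ ^ 2
          ≤ ∑ j, (F * ∑ i, ‖P i (P j ψ)‖ ^ 2) := Finset.sum_le_sum fun j _ => stepA j
        _ = F * ∑ j, ∑ i, ‖P i (P j ψ)‖ ^ 2 := by rw [Finset.mul_sum]
        _ = F * T := by rw [hT, Finset.sum_comm]
    have h2 : F ^ 4 ≤ ‖w‖ ^ 4 := by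
      apply pow_le_pow_left₀ hF0 hFw
    calc F ^ 4 ≤ ‖w‖ ^ 4 := h2
      _ ≤ n * ∑ j, ‖(inner ℂ w (P j ψ) : ℂ)‖ ^ 2 := stepB
      _ ≤ n * (F * T) := mul_le_mul_of_nonneg_left h1 hn0
  rcases eq_or_lt_of_le hF0 with h | h
  · have hF3 : F ^ 3 = 0 := by rw [← h]; ring
    rw [hF3]; exact mul_nonneg hn0 hT0
  · nlinarith [key, h]

end AuxProjection

/-- The sequential-projection extraction procedure: pick `(i,j)` uniformly from `C²`,
fail if `(i,j) ∉ S`, otherwise measure `{P j, I − P j}` then `{P i, I − P i}` and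
succeed iff both accept.  Its success probability,
`(1/|C|²)·∑_{(i,j)∈S} ‖Pᵢ Pⱼ ψ‖²`, is at least
`((1/|C|)·∑ᵢ ‖Pᵢ ψ‖²)³ − (1 − |S|/|C|²)`. -/
theorem sequential_extraction_success {H : Type*} [NormedAddCommGroup H]
    [InnerProductSpace ℂ H]
    {C : Type*} [Fintype C] [DecidableEq C] [Nonempty C]
    (P : C → H →ₗ[ℂ] H)
    (hidem : ∀ i, P i ∘ₗ P i = P i)
    (hsa : ∀ i, ∀ x y : H, (inner ℂ (P i x) y : ℂ) = inner ℂ x (P i y))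
    (S : Finset (C × C)) (ψ : H) (hψ : ‖ψ‖ = 1) :
    ((1 / (Fintype.card C : ℝ)) * ∑ i, ‖P i ψ‖ ^ 2) ^ 3
        - (1 - (S.card : ℝ) / (Fintype.card C : ℝ) ^ 2)
      ≤ (1 / (Fintype.card C : ℝ) ^ 2) * ∑ p ∈ S, ‖P p.1 (P p.2 ψ)‖ ^ 2 := by
  classical
  set n : ℝ := (Fintype.card C : ℝ) with hn
  have hn1 : (1 : ℝ) ≤ n := by
    rw [hn]; exact_mod_cast Fintype.card_pos
  have hn0 : (0 : ℝ) < n := lt_of_lt_of_le one_pos hn1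
  set F : ℝ := ∑ i, ‖P i ψ‖ ^ 2 with hF
  set T : ℝ := ∑ i, ∑ j, ‖P i (P j ψ)‖ ^ 2 with hT
  have key : F ^ 3 ≤ n * T := unruh_core P hidem hsa ψ hψ
  -- every term is at most 1
  have hterm : ∀ p : C × C, ‖P p.1 (P p.2 ψ)‖ ^ 2 ≤ 1 := by
    intro p
    have h1 : ‖P p.1 (P p.2 ψ)‖ ≤ ‖P p.2 ψ‖ :=
      proj_norm_le (P p.1) (hidem p.1) (hsa p.1) _
    have h2 : ‖P p.2 ψ‖ ≤ ‖ψ‖ := proj_norm_le (P p.2) (hidem p.2) (hsa p.2) _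
    have h3 : ‖P p.1 (P p.2 ψ)‖ ≤ 1 := by rw [← hψ]; exact h1.trans h2
    nlinarith [norm_nonneg (P p.1 (P p.2 ψ))]
  -- T as a sum over the product type
  have hTprod : T = ∑ p : C × C, ‖P p.1 (P p.2 ψ)‖ ^ 2 := by
    rw [hT, Fintype.sum_prod_type]
  -- the sum over S misses at most n² − |S| mass
  have hSsum : T - ((Fintype.card C : ℝ) ^ 2 - S.card) ≤ ∑ p ∈ S, ‖P p.1 (P p.2 ψ)‖ ^ 2 := by
    have hsplit : (∑ p ∈ (Finset.univ \ S), ‖P p.1 (P p.2 ψ)‖ ^ 2)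
        + ∑ p ∈ S, ‖P p.1 (P p.2 ψ)‖ ^ 2 = T := by
      rw [hTprod]
      exact Finset.sum_sdiff (Finset.subset_univ S)
    have hbound : (∑ p ∈ (Finset.univ \ S), ‖P p.1 (P p.2 ψ)‖ ^ 2)
        ≤ ((Finset.univ \ S).card : ℝ) := by
      calc (∑ p ∈ (Finset.univ \ S), ‖P p.1 (P p.2 ψ)‖ ^ 2)
          ≤ ∑ _p ∈ (Finset.univ \ S), (1 : ℝ) :=
            Finset.sum_le_sum fun p _ => hterm p
        _ = ((Finset.univ \ S).card : ℝ) := by simp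
    have hcard : ((Finset.univ \ S).card : ℝ) = (Fintype.card C : ℝ) ^ 2 - S.card := by
      rw [Finset.card_sdiff_of_subset (Finset.subset_univ S)]
      have h1 : S.card ≤ (Finset.univ : Finset (C × C)).card :=
        Finset.card_le_card (Finset.subset_univ S)
      rw [Nat.cast_sub h1]
      congr 1
      rw [Finset.card_univ, Fintype.card_prod]
      push_cast; ring
    rw [hcard] at hbound
    linarith
  -- final arithmetic
  have h1 : ((1 / n) * F) ^ 3 ≤ (1 / n ^ 2) * T := by
    have e1 : ((1 / n) * F) ^ 3 = F ^ 3 * (1 / n ^ 3) := by ring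
    rw [e1]
    have h2 : F ^ 3 * (1 / n ^ 3) ≤ (n * T) * (1 / n ^ 3) :=
      mul_le_mul_of_nonneg_right key (by positivity)
    refine h2.trans_eq ?_
    field_simp
  have h3 : (1 / n ^ 2) * (T - (n ^ 2 - S.card)) ≤ (1 / n ^ 2) * ∑ p ∈ S, ‖P p.1 (P p.2 ψ)‖ ^ 2 := by
    apply mul_le_mul_of_nonneg_left _ (by positivity)
    rw [hn]; exact hSsum
  have h4 : (1 / n ^ 2) * (T - (n ^ 2 - S.card)) = (1 / n ^ 2) * T - (1 - (S.card : ℝ) / n ^ 2) := by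
    field_simp
  rw [h4] at h3
  linarith
end

section
/- Let |φ_{b,0}⟩, |φ_{1}⟩ := |φ_{1,0}⟩ + |φ_c⟩ and |φ_0⟩ := |φ_{0,0}⟩ + |φ_c⟩ be unit vectors in a Hilbert space H, where ⟨φ_{b,0}|φ_c⟩ = 0 for b ∈ {0,1}. Let Π be an orthogonal projection on H ⊗ (C²)^{⊗n}, p_b := ‖Π(|φ_b⟩⊗|0^n⟩)‖² with p_0 ≥ p_1, and suppose ‖Π(|φ_{b,0}⟩⊗|0^n⟩)‖² ≤ γ for b ∈ {0,1}, where γ < 1/36. Define |ψ_b⟩ := √(1−p_b)·|0⟩|0^m⟩|0^n⟩ + |1⟩·Π(|φ_b⟩⊗|0^n⟩) (unit vectors on an extended space). Then |⟨ψ_0|ψ_1⟩| ≥ 1 − 6√γ, and consequently ‖ |ψ_0⟩⟨ψ_0| − |ψ_1⟩⟨ψ_1| ‖_tr = √(1 − |⟨ψ_0|ψ_1⟩|²) ≤ √(12√γ) < 4·γ^{1/4}. -/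
set_option maxHeartbeats 800000


/-- Overlap lower bound for the purified extraction states.  Here `J : H →ₗᵢ K`
is the ancilla-appending isometry `φ ↦ φ ⊗ |0^n⟩`, `P` an orthogonal projection
on `K`, and `|φ_b⟩ = |φ_{b,0}⟩ + |φ_c⟩` unit vectors sharing the common
component `φ_c = φ_{0,1} = φ_{1,1}` with `⟨φ_{b,0}|φ_c⟩ = 0`.  With
`p_b = ‖P(φ_b⊗0^n)‖²`, `p₀ ≥ p₁`, `‖P(φ_{b,0}⊗0^n)‖² ≤ γ < 1/36`, the
purifications `ψ_b = √(1−p_b)·|0⟩|0^m⟩|0^n⟩ + |1⟩·P(φ_b⊗0^n)` have overlap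
`⟨ψ₀|ψ₁⟩ = √((1−p₀)(1−p₁)) + ⟨P(φ₀⊗0^n)|P(φ₁⊗0^n)⟩` satisfying
`|⟨ψ₀|ψ₁⟩| ≥ 1 − 6√γ`; consequently their trace distance
`√(1 − |⟨ψ₀|ψ₁⟩|²) ≤ √(12√γ) < 4·γ^{1/4}`. -/
theorem purified_overlap_bound {H K : Type*}
    [NormedAddCommGroup H] [InnerProductSpace ℂ H]
    [NormedAddCommGroup K] [InnerProductSpace ℂ K]
    (J : H →ₗᵢ[ℂ] K) (P : K →ₗ[ℂ] K)
    (hP2 : P ∘ₗ P = P) (hPsa : ∀ x y : K, (inner ℂ (P x) y : ℂ) = inner ℂ x (P y))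
    (φ00 φ10 φc : H)
    (h0 : (inner ℂ φ00 φc : ℂ) = 0) (h1 : (inner ℂ φ10 φc : ℂ) = 0)
    (hu0 : ‖φ00 + φc‖ = 1) (hu1 : ‖φ10 + φc‖ = 1)
    (γ : ℝ) (hγpos : 0 < γ) (hγ : γ < 1 / 36)
    (hγ0 : ‖P (J φ00)‖ ^ 2 ≤ γ) (hγ1 : ‖P (J φ10)‖ ^ 2 ≤ γ)
    (p0 p1 : ℝ)
    (hp0 : p0 = ‖P (J (φ00 + φc))‖ ^ 2) (hp1 : p1 = ‖P (J (φ10 + φc))‖ ^ 2)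
    (hple : p1 ≤ p0)
    (ov : ℂ)
    (hov : ov = Complex.ofReal (Real.sqrt ((1 - p0) * (1 - p1)))
        + (inner ℂ (P (J (φ00 + φc))) (P (J (φ10 + φc))) : ℂ)) :
    1 - 6 * Real.sqrt γ ≤ ‖ov‖
      ∧ Real.sqrt (1 - ‖ov‖ ^ 2) ≤ Real.sqrt (12 * Real.sqrt γ)
      ∧ Real.sqrt (12 * Real.sqrt γ) < 4 * γ ^ ((1 : ℝ) / 4) := by
  set sγ := Real.sqrt γ with hsγ
  have hsγ0 : 0 ≤ sγ := Real.sqrt_nonneg γ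
  have hsγ2 : sγ ^ 2 = γ := Real.sq_sqrt hγpos.le
  have hsγlt : sγ < 1 / 6 := by
    rw [hsγ, show (1:ℝ)/6 = Real.sqrt ((1:ℝ)/36) by
      rw [show (1:ℝ)/36 = (1/6)^2 by norm_num, Real.sqrt_sq (by norm_num)]]
    exact Real.sqrt_lt_sqrt hγpos.le hγ
  -- P is a contraction
  have hPnorm : ∀ x : K, ‖P x‖ ≤ ‖x‖ := by
    intro x
    have hPP : P (P x) = P x := LinearMap.ext_iff.mp hP2 x
    have h1 : (inner ℂ (P x) (P x) : ℂ) = inner ℂ x (P x) := by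
      rw [hPsa x (P x), hPP]
    have h2 : ‖P x‖ ^ 2 ≤ ‖x‖ * ‖P x‖ := by
      have e : RCLike.re (inner ℂ (P x) (P x) : ℂ) = ‖P x‖ ^ 2 :=
        inner_self_eq_norm_sq _
      rw [h1] at e
      calc ‖P x‖ ^ 2 = RCLike.re (inner ℂ x (P x) : ℂ) := e.symm
        _ ≤ ‖(inner ℂ x (P x) : ℂ)‖ := RCLike.re_le_norm _
        _ ≤ ‖x‖ * ‖P x‖ := norm_inner_le_norm _ _
    nlinarith [norm_nonneg x, norm_nonneg (P x)]
  set a := P (J φ00) with ha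
  set b := P (J φ10) with hb
  set c := P (J φc) with hc
  have hPadd0 : P (J (φ00 + φc)) = a + c := by rw [ha, hc, ← map_add, ← map_add]
  have hPadd1 : P (J (φ10 + φc)) = b + c := by rw [hb, hc, ← map_add, ← map_add]
  -- basic norm facts
  have hna : ‖a‖ ≤ sγ := by
    rw [hsγ]
    have := Real.sqrt_le_sqrt hγ0
    rwa [Real.sqrt_sq (norm_nonneg a)] at this
  have hnb : ‖b‖ ≤ sγ := by
    rw [hsγ]
    have := Real.sqrt_le_sqrt hγ1
    rwa [Real.sqrt_sq (norm_nonneg b)] at this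
  have hφc : ‖φc‖ ≤ 1 := by
    have hpyth : ‖φ00 + φc‖ ^ 2 = ‖φ00‖ ^ 2 + 2 * RCLike.re (inner ℂ φ00 φc : ℂ)
        + ‖φc‖ ^ 2 := norm_add_sq φ00 φc
    rw [hu0, h0] at hpyth
    simp at hpyth
    nlinarith [norm_nonneg φ00, norm_nonneg φc, sq_nonneg (‖φ00‖)]
  have hnc : ‖c‖ ≤ 1 := by
    calc ‖c‖ ≤ ‖J φc‖ := hPnorm _
      _ = ‖φc‖ := J.norm_map _
      _ ≤ 1 := hφc
  have hp0le : p0 ≤ 1 := by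
    rw [hp0]
    have : ‖P (J (φ00 + φc))‖ ≤ 1 := by
      calc ‖P (J (φ00 + φc))‖ ≤ ‖J (φ00 + φc)‖ := hPnorm _
        _ = ‖φ00 + φc‖ := J.norm_map _
        _ = 1 := hu0
    nlinarith [norm_nonneg (P (J (φ00 + φc)))]
  have hp1nn : 0 ≤ p1 := by rw [hp1]; positivity
  have hp0nn : 0 ≤ p0 := by rw [hp0]; positivity
  have hp1le : p1 ≤ 1 := le_trans hple hp0le
  -- sqrt term lower bound
  have hS : 1 - p0 ≤ Real.sqrt ((1 - p0) * (1 - p1)) := by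
    rw [Real.le_sqrt (by linarith) (by nlinarith)]
    nlinarith
  -- ‖c‖² ≥ p0 - 2sγ - γ
  have hcsq : p0 - γ - 2 * sγ ≤ ‖c‖ ^ 2 := by
    have htri : ‖a + c‖ ≤ ‖a‖ + ‖c‖ := norm_add_le a c
    have : p0 = ‖a + c‖ ^ 2 := by rw [hp0, hPadd0]
    nlinarith [norm_nonneg a, norm_nonneg c, norm_nonneg (a + c)]
  -- cross-term bounds
  have hab : |(RCLike.re (inner ℂ a b : ℂ))| ≤ γ := by
    calc |(RCLike.re (inner ℂ a b : ℂ))| ≤ ‖(inner ℂ a b : ℂ)‖ := RCLike.abs_re_le_norm _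
      _ ≤ ‖a‖ * ‖b‖ := norm_inner_le_norm _ _
      _ ≤ sγ * sγ := by nlinarith [norm_nonneg a, norm_nonneg b]
      _ = γ := by rw [← hsγ2]; ring
  have hac : |(RCLike.re (inner ℂ a c : ℂ))| ≤ sγ := by
    calc |(RCLike.re (inner ℂ a c : ℂ))| ≤ ‖(inner ℂ a c : ℂ)‖ := RCLike.abs_re_le_norm _
      _ ≤ ‖a‖ * ‖c‖ := norm_inner_le_norm _ _
      _ ≤ sγ * 1 := by nlinarith [norm_nonneg a, norm_nonneg c]
      _ = sγ := by ring
  have hcb : |(RCLike.re (inner ℂ c b : ℂ))| ≤ sγ := by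
    calc |(RCLike.re (inner ℂ c b : ℂ))| ≤ ‖(inner ℂ c b : ℂ)‖ := RCLike.abs_re_le_norm _
      _ ≤ ‖c‖ * ‖b‖ := norm_inner_le_norm _ _
      _ ≤ 1 * sγ := by nlinarith [norm_nonneg b, norm_nonneg c]
      _ = sγ := by ring
  -- expand re of inner
  have hexp : RCLike.re (inner ℂ (a + c) (b + c) : ℂ)
      = RCLike.re (inner ℂ a b : ℂ) + RCLike.re (inner ℂ a c : ℂ)
        + RCLike.re (inner ℂ c b : ℂ) + ‖c‖ ^ 2 := by
    rw [inner_add_left, inner_add_right, inner_add_right]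
    simp only [map_add, inner_self_eq_norm_sq]
    ring
  -- real part of ov
  have hovre : ov.re = Real.sqrt ((1 - p0) * (1 - p1))
      + RCLike.re (inner ℂ (a + c) (b + c) : ℂ) := by
    rw [hov, hPadd0, hPadd1]
    simp [Complex.add_re]
  have hre : 1 - 6 * sγ ≤ ov.re := by
    rw [hovre, hexp]
    have h6 : γ ≤ sγ := by nlinarith
    have := abs_le.mp hab
    have := abs_le.mp hac
    have := abs_le.mp hcb
    nlinarith
  have h1main : 1 - 6 * sγ ≤ ‖ov‖ := by
    calc 1 - 6 * sγ ≤ ov.re := hre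
      _ ≤ |ov.re| := le_abs_self _
      _ ≤ ‖ov‖ := Complex.abs_re_le_norm ov
  refine ⟨h1main, ?_, ?_⟩
  · apply Real.sqrt_le_sqrt
    have hovnn : 0 ≤ 1 - 6 * sγ := by linarith
    nlinarith [norm_nonneg ov]
  · have h12 : Real.sqrt (12 * sγ) = Real.sqrt 12 * Real.sqrt sγ :=
      Real.sqrt_mul (by norm_num) _
    have hq : Real.sqrt sγ = γ ^ ((1 : ℝ) / 4) := by
      rw [hsγ, Real.sqrt_eq_rpow, Real.sqrt_eq_rpow, ← Real.rpow_mul hγpos.le]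
      norm_num
    have h12lt : Real.sqrt 12 < 4 := by
      rw [show (4:ℝ) = Real.sqrt 16 by
        rw [show (16:ℝ) = 4^2 by norm_num, Real.sqrt_sq (by norm_num)]]
      exact Real.sqrt_lt_sqrt (by norm_num) (by norm_num)
    have hqpos : 0 < γ ^ ((1 : ℝ) / 4) := Real.rpow_pos_of_pos hγpos _
    rw [h12, hq]
    exact mul_lt_mul_of_pos_right h12lt hqpos
end

section
/- Let H decompose as an orthogonal direct sum H = S_{<δ} ⊕ S_{≥δ}. Suppose an experiment E maps states to classical/quantum outputs such that: (i) for every unit vector |ψ⟩ ∈ S_{<δ}, E(|ψ⟩) outputs Fail with probability at least 1 − η; and (ii) for any unit vectors in S_{≥δ} the outputs of two experiments E_0, E_1 agree. If initial states |φ_0⟩, |φ_1⟩ decompose as |φ_b⟩ = |φ_{b,<}⟩ + |φ_{b,≥}⟩ with |φ_{b,<}⟩ ∈ S_{<δ}, |φ_{b,≥}⟩ ∈ S_{≥δ}, |φ_{0,≥}⟩ = |φ_{1,≥}⟩, and E respects the decomposition (does not interfere the two components), then the output distributions of E on |φ_0⟩ and |φ_1⟩ have trace distance at most 4·η^{1/4}.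 -/
open scoped ComplexOrder

noncomputable section

/-- The inner product `⟨v|w⟩ = ∑ᵢ conj(vᵢ)·wᵢ` on `ℂ^d`. -/
def cinner {ι : Type*} [Fintype ι] (v w : ι → ℂ) : ℂ :=
  ∑ i, (starRingEnd ℂ) (v i) * w i

/-- The Euclidean norm on `ℂ^d`. -/
def vnorm {ι : Type*} [Fintype ι] (v : ι → ℂ) : ℝ :=
  Real.sqrt (∑ i, Complex.normSq (v i))

/-- The outer product `|v⟩⟨w|` as a matrix. -/
def outer {ι : Type*} [Fintype ι] (v w : ι → ℂ) : Matrix ι ι ℂ :=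
  Matrix.of fun i j => v i * (starRingEnd ℂ) (w j)

/-- The trace norm `Tr|A| = Tr √(AᴴA)` of a matrix. -/
def traceNorm {ι : Type*} [Fintype ι] [DecidableEq ι] (A : Matrix ι ι ℂ) : ℝ :=
  (((Matrix.posSemidef_conjTranspose_mul_self A).1.eigenvectorUnitary : Matrix ι ι ℂ) *
      Matrix.diagonal (((↑) : ℝ → ℂ) ∘ (√·) ∘ (Matrix.posSemidef_conjTranspose_mul_self A).1.eigenvalues) *
      (star (Matrix.posSemidef_conjTranspose_mul_self A).1.eigenvectorUnitary : Matrix ι ι ℂ)).trace.re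

/-- Appending the ancilla `|0^n⟩` (with `a0` playing the role of `0^n` in the
ancilla index set): `φ ↦ φ ⊗ |a0⟩`. -/
def embAnc {d a : ℕ} (a0 : Fin a) (φ : Fin d → ℂ) : Fin d × Fin a → ℂ :=
  fun p => if p.2 = a0 then φ p.1 else 0

set_option linter.unusedSectionVars false
set_option linter.unusedVariables false
set_option linter.unusedTactic false

section Bridge
variable {ι : Type*} [Fintype ι]

/-- Reinterpret a plain function as a Euclidean space vector. -/
def toE (v : ι → ℂ) : EuclideanSpace ℂ ι := (WithLp.equiv 2 _).symm v

lemma toE_add (v w : ι → ℂ) : toE (v + w) = toE v + toE w := rfl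
lemma toE_sub (v w : ι → ℂ) : toE (v - w) = toE v - toE w := rfl

lemma vnorm_eq (v : ι → ℂ) : vnorm v = ‖toE v‖ := by
  rw [EuclideanSpace.norm_eq, vnorm]
  congr 1
  refine Finset.sum_congr rfl fun i _ => ?_
  rw [← Complex.sq_norm]
  rfl

lemma cinner_eq (v w : ι → ℂ) : cinner v w = inner ℂ (toE v) (toE w) := by
  rw [PiLp.inner_apply, cinner]
  simp only [RCLike.inner_apply']
  rfl

lemma vnorm_nonneg (v : ι → ℂ) : 0 ≤ vnorm v := Real.sqrt_nonneg _

lemma vnorm_sq (v : ι → ℂ) : vnorm v ^ 2 = ∑ i, Complex.normSq (v i) := by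
  rw [vnorm, Real.sq_sqrt]
  exact Finset.sum_nonneg fun i _ => Complex.normSq_nonneg _

lemma vnorm_add_le (v w : ι → ℂ) : vnorm (v + w) ≤ vnorm v + vnorm w := by
  rw [vnorm_eq, vnorm_eq, vnorm_eq, toE_add]; exact norm_add_le _ _

lemma vnorm_eq_zero {v : ι → ℂ} (h : vnorm v = 0) : v = 0 := by
  rw [vnorm_eq] at h
  have h2 : toE v = 0 := norm_eq_zero.mp h
  funext i
  exact congrFun (congrArg WithLp.ofLp h2) i

lemma abs_cinner_le (v w : ι → ℂ) : ‖cinner v w‖ ≤ vnorm v * vnorm w := by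
  rw [cinner_eq, vnorm_eq, vnorm_eq]
  exact norm_inner_le_norm (𝕜 := ℂ) _ _

/-- Pythagoras for `cinner`-orthogonal vectors. -/
lemma vnorm_add_sq_of_orth {v w : ι → ℂ} (h : cinner v w = 0) :
    vnorm (v + w) ^ 2 = vnorm v ^ 2 + vnorm w ^ 2 := by
  rw [vnorm_eq, vnorm_eq, vnorm_eq, toE_add]
  rw [@norm_add_sq ℂ _ _ _ _ (toE v) (toE w)]
  rw [cinner_eq] at h
  rw [h]
  simp

end Bridge

section MulVec
variable {ι : Type*} [Fintype ι]

lemma vnorm_smul_real (r : ℝ) (v : ι → ℂ) : vnorm ((r : ℂ) • v) = |r| * vnorm v := by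
  rw [vnorm_eq, vnorm_eq]
  have : toE ((r : ℂ) • v) = (r : ℂ) • toE v := rfl
  rw [this, norm_smul]
  simp [Complex.norm_real]

lemma embAnc_sub {d a : ℕ} (a0 : Fin a) (u v : Fin d → ℂ) :
    embAnc a0 (u - v) = embAnc a0 u - embAnc a0 v := by
  funext p
  simp only [embAnc, Pi.sub_apply]
  split <;> simp

lemma vnorm_embAnc {d a : ℕ} (a0 : Fin a) (φ : Fin d → ℂ) :
    vnorm (embAnc a0 φ) = vnorm φ := by
  unfold vnorm
  congr 1
  rw [Fintype.sum_prod_type]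
  refine Finset.sum_congr rfl fun i _ => ?_
  rw [Finset.sum_eq_single a0]
  · simp [embAnc]
  · intro j _ hj; simp [embAnc, hj]
  · intro h; simp at h

lemma cinner_mulVec (M : Matrix ι ι ℂ) (v w : ι → ℂ) :
    cinner (M.mulVec v) w = cinner v (M.conjTranspose.mulVec w) := by
  unfold cinner Matrix.mulVec dotProduct
  simp only [map_sum, map_mul, Matrix.conjTranspose_apply, Finset.mul_sum, Finset.sum_mul]
  rw [Finset.sum_comm]
  refine Finset.sum_congr rfl fun j _ => Finset.sum_congr rfl fun i _ => ?_
  simp only [Matrix.conjTranspose_apply, RCLike.star_def]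
  ring

lemma cinner_self_eq (v : ι → ℂ) : cinner v v = ((vnorm v ^ 2 : ℝ) : ℂ) := by
  rw [cinner, vnorm_sq]
  push_cast
  refine Finset.sum_congr rfl fun i _ => ?_
  rw [mul_comm, Complex.mul_conj]

/-- A Hermitian idempotent contracts norms. -/
lemma vnorm_proj_le [DecidableEq ι] {P : Matrix ι ι ℂ} (hPh : P.IsHermitian)
    (hP2 : P * P = P) (v : ι → ℂ) : vnorm (P.mulVec v) ≤ vnorm v := by
  have key : cinner (P.mulVec v) (P.mulVec v) = cinner v (P.mulVec v) := by
    rw [cinner_mulVec, hPh.eq, Matrix.mulVec_mulVec, hP2]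
  have h1 : ((vnorm (P.mulVec v) ^ 2 : ℝ) : ℂ) = cinner v (P.mulVec v) := by
    rw [← key, cinner_self_eq]
  have h2 : vnorm (P.mulVec v) ^ 2 ≤ vnorm v * vnorm (P.mulVec v) := by
    calc vnorm (P.mulVec v) ^ 2 = ‖((vnorm (P.mulVec v) ^ 2 : ℝ) : ℂ)‖ := by
          rw [Complex.norm_real, Real.norm_eq_abs, abs_of_nonneg (sq_nonneg _)]
      _ = ‖cinner v (P.mulVec v)‖ := by rw [h1]
      _ ≤ vnorm v * vnorm (P.mulVec v) := abs_cinner_le _ _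
  rcases eq_or_lt_of_le (vnorm_nonneg (P.mulVec v)) with h | h
  · rw [← h]; exact vnorm_nonneg v
  · nlinarith

end MulVec

section PSD
variable {ι : Type*} [Fintype ι] [DecidableEq ι]

lemma trace_nonneg_of_psd {M : Matrix ι ι ℂ} (hM : M.PosSemidef) : 0 ≤ M.trace := by
  unfold Matrix.trace
  refine Finset.sum_nonneg fun i _ => ?_
  have := hM.dotProduct_mulVec_nonneg (Pi.single i 1 : ι → ℂ)
  have hd : dotProduct (star ((Pi.single i 1 : ι → ℂ))) (M.mulVec (Pi.single i 1 : ι → ℂ)) =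
      M.diag i := by
    rw [Matrix.mulVec_single]
    have hst : star ((Pi.single i 1 : ι → ℂ)) = (Pi.single i 1 : ι → ℂ) := by
      funext j
      simp [Pi.single_apply, apply_ite (star : ℂ → ℂ)]
    rw [hst, single_dotProduct]
    simp [Matrix.diag]
  rwa [hd] at this

open scoped MatrixOrder in
lemma trace_mul_nonneg_of_psd {B Q : Matrix ι ι ℂ} (hB : B.PosSemidef) (hQ : Q.PosSemidef) :
    0 ≤ (B * Q).trace := by
  have h1 : B * Q = B * CFC.sqrt Q * CFC.sqrt Q := by
    rw [Matrix.mul_assoc, CFC.sqrt_mul_sqrt_self Q hQ.nonneg]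
  have h2 : (B * Q).trace = (CFC.sqrt Q * B * CFC.sqrt Q).trace := by
    rw [h1, Matrix.trace_mul_comm, Matrix.mul_assoc]
  rw [h2]
  have hherm : (CFC.sqrt Q).conjTranspose = CFC.sqrt Q := (Matrix.nonneg_iff_posSemidef.mp (CFC.sqrt_nonneg Q)).1
  have : (CFC.sqrt Q * B * CFC.sqrt Q).PosSemidef := by
    have := hB.conjTranspose_mul_mul_same (CFC.sqrt Q)
    rwa [hherm] at this
  exact trace_nonneg_of_psd this

lemma re_trace_mul_nonneg_of_psd {B Q : Matrix ι ι ℂ} (hB : B.PosSemidef) (hQ : Q.PosSemidef) :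
    0 ≤ ((B * Q).trace).re :=
  (Complex.le_def.mp (trace_mul_nonneg_of_psd hB hQ)).1

lemma psd_smul_real {M : Matrix ι ι ℂ} (hM : M.PosSemidef) {r : ℝ} (hr : 0 ≤ r) :
    ((r : ℂ) • M).PosSemidef := by
  refine Matrix.PosSemidef.of_dotProduct_mulVec_nonneg ?_ ?_
  · unfold Matrix.IsHermitian
    rw [Matrix.conjTranspose_smul, hM.1.eq]
    congr 1
    simp [Complex.conj_ofReal]
  · intro x
    have := hM.dotProduct_mulVec_nonneg x
    rw [Matrix.smul_mulVec, dotProduct_smul]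
    have hr' : (0:ℂ) ≤ (r : ℂ) := by
      rw [Complex.le_def]; simp [hr]
    exact mul_nonneg hr' this

lemma psd_outer_self (v : ι → ℂ) : (outer v v).PosSemidef := by
  refine Matrix.PosSemidef.of_dotProduct_mulVec_nonneg ?_ ?_
  · unfold Matrix.IsHermitian
    funext i j
    simp [outer, Matrix.conjTranspose_apply, mul_comm]
  · intro x
    have : dotProduct (star x) ((outer v v).mulVec x) =
        (starRingEnd ℂ) (cinner v x) * cinner v x := by
      simp only [dotProduct, Matrix.mulVec, outer, cinner, Matrix.of_apply,
        Pi.star_apply, RCLike.star_def, map_sum, map_mul,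
        RingHomCompTriple.comp_apply, RingHom.id_apply, Finset.mul_sum, Finset.sum_mul]
      rw [Finset.sum_comm]
      refine Finset.sum_congr rfl fun i _ => Finset.sum_congr rfl fun j _ => ?_
      ring
    rw [this, Complex.conj_mul']
    positivity
  
lemma trace_outer_self (v : ι → ℂ) : (outer v v).trace = ((vnorm v ^ 2 : ℝ) : ℂ) := by
  unfold Matrix.trace Matrix.diag outer
  rw [vnorm_sq]
  push_cast
  refine Finset.sum_congr rfl fun i _ => ?_
  simp [Complex.mul_conj]

end PSD

section TraceNorm
variable {ι : Type*} [Fintype ι] [DecidableEq ι]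

open scoped MatrixOrder in
lemma traceNorm_eq_sqrt (A : Matrix ι ι ℂ) :
    traceNorm A = (CFC.sqrt (A.conjTranspose * A)).trace.re := by
  rw [CFC.sqrt_eq_real_sqrt _ (Matrix.posSemidef_conjTranspose_mul_self A).nonneg, cfcₙ_eq_cfc,
    (Matrix.posSemidef_conjTranspose_mul_self A).1.cfc_eq]
  rfl

open scoped MatrixOrder in
lemma traceNorm_le_of_psd_decomp {A B C : Matrix ι ι ℂ}
    (hB : B.PosSemidef) (hC : C.PosSemidef) (hABC : A = B - C) :
    traceNorm A ≤ B.trace.re + C.trace.re := by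
  have hA : A.IsHermitian := by rw [hABC]; exact hB.1.sub hC.1
  set U : Matrix ι ι ℂ := (hA.eigenvectorUnitary : Matrix ι ι ℂ) with hUdef
  set lam := hA.eigenvalues with hlam
  have hsp : A = U * Matrix.diagonal (fun i => ((lam i : ℝ) : ℂ)) * star U :=
    hA.spectral_theorem
  have hU1 : U * star U = 1 := Matrix.mem_unitaryGroup_iff.mp hA.eigenvectorUnitary.2
  have hU2 : star U * U = 1 := Matrix.mem_unitaryGroup_iff'.mp hA.eigenvectorUnitary.2
  have hmul : ∀ f g : ι → ℂ, (U * Matrix.diagonal f * star U) * (U * Matrix.diagonal g * star U)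
      = U * Matrix.diagonal (fun i => f i * g i) * star U := by
    intro f g
    calc (U * Matrix.diagonal f * star U) * (U * Matrix.diagonal g * star U)
        = U * (Matrix.diagonal f * ((star U * U) * (Matrix.diagonal g * star U))) := by
          simp only [Matrix.mul_assoc]
      _ = U * (Matrix.diagonal f * (Matrix.diagonal g * star U)) := by rw [hU2, one_mul]
      _ = U * ((Matrix.diagonal f * Matrix.diagonal g) * star U) := by
          rw [Matrix.mul_assoc]
      _ = U * Matrix.diagonal (fun i => f i * g i) * star U := by
          rw [Matrix.diagonal_mul_diagonal, Matrix.mul_assoc]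
  have htr : ∀ f : ι → ℂ, (U * Matrix.diagonal f * star U).trace = ∑ i, f i := by
    intro f
    rw [Matrix.trace_mul_cycle, hU2, one_mul, Matrix.trace_diagonal]
  have hpsdconj : ∀ f : ι → ℂ, (∀ i, 0 ≤ f i) →
      (U * Matrix.diagonal f * star U).PosSemidef := by
    intro f hf
    have hd : (Matrix.diagonal f).PosSemidef := Matrix.posSemidef_diagonal_iff.mpr hf
    have h2 := hd.mul_mul_conjTranspose_same U
    rw [Matrix.star_eq_conjTranspose]
    exact h2
  set M := U * Matrix.diagonal (fun i => ((|lam i| : ℝ) : ℂ)) * star U with hMdef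
  have hMpsd : M.PosSemidef := hpsdconj _ fun i => by
    rw [Complex.le_def]; simp [abs_nonneg]
  have hMsq : M ^ 2 = A.conjTranspose * A := by
    rw [hA.eq, pow_two, hMdef, hmul]
    conv_rhs => rw [hsp]
    rw [hmul]
    have hfun : (fun i => ((|lam i| : ℝ) : ℂ) * ((|lam i| : ℝ) : ℂ))
        = fun i => ((lam i : ℝ) : ℂ) * ((lam i : ℝ) : ℂ) := by
      funext i
      rw [← Complex.ofReal_mul, ← Complex.ofReal_mul, abs_mul_abs_self]
    rw [hfun]
  have hMeq : M = CFC.sqrt (A.conjTranspose * A) :=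
    ((CFC.sqrt_eq_iff _ _ (Matrix.posSemidef_conjTranspose_mul_self A).nonneg hMpsd.nonneg).mpr
      (by rw [← pow_two]; exact hMsq)).symm
  have htn : traceNorm A = ∑ i, |lam i| := by
    rw [traceNorm_eq_sqrt, ← hMeq, hMdef, htr, Complex.re_sum]
    simp
  set s : ι → ℂ := fun i => if 0 ≤ lam i then (1 : ℂ) else -1 with hsdef
  set S := U * Matrix.diagonal s * star U with hSdef
  have hAS : A * S = M := by
    conv_lhs => rw [hsp, hSdef, hmul]
    have hfun : (fun i => ((lam i : ℝ) : ℂ) * s i) = fun i => ((|lam i| : ℝ) : ℂ) := by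
      funext i
      rw [hsdef]
      by_cases h : 0 ≤ lam i
      · simp only [if_pos h, mul_one, abs_of_nonneg h]
      · simp only [if_neg h, abs_of_neg (lt_of_not_ge h)]
        push_cast
        ring
    rw [hfun]
  have hone : U * Matrix.diagonal (fun _ => (1:ℂ)) * star U = 1 := by
    rw [Matrix.diagonal_one, Matrix.mul_one, hU1]
  have hS1 : (1 - S).PosSemidef := by
    have he : (1 : Matrix ι ι ℂ) - S = U * Matrix.diagonal (fun i => 1 - s i) * star U := by
      have hd : Matrix.diagonal (fun i => 1 - s i)
          = Matrix.diagonal (fun _ => (1:ℂ)) - Matrix.diagonal s := by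
        rw [Matrix.diagonal_sub]
      rw [hd, Matrix.mul_sub, Matrix.sub_mul, hone]
    rw [he]
    refine hpsdconj _ fun i => ?_
    rw [hsdef]
    by_cases h : 0 ≤ lam i <;> simp only [if_pos, if_neg, h, if_true, if_false] <;>
      rw [Complex.le_def] <;> norm_num
  have hS2 : (1 + S).PosSemidef := by
    have he : (1 : Matrix ι ι ℂ) + S = U * Matrix.diagonal (fun i => 1 + s i) * star U := by
      have hd : Matrix.diagonal (fun i => 1 + s i)
          = Matrix.diagonal (fun _ => (1:ℂ)) + Matrix.diagonal s := by
        rw [Matrix.diagonal_add]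
      rw [hd, Matrix.mul_add, Matrix.add_mul, hone]
    rw [he]
    refine hpsdconj _ fun i => ?_
    rw [hsdef]
    by_cases h : 0 ≤ lam i <;> simp only [if_pos, if_neg, h, if_true, if_false] <;>
      rw [Complex.le_def] <;> norm_num
  have hBS : ((B * S).trace).re ≤ B.trace.re := by
    have h0 : 0 ≤ ((B * (1 - S)).trace).re := re_trace_mul_nonneg_of_psd hB hS1
    rw [Matrix.mul_sub, Matrix.mul_one, Matrix.trace_sub, Complex.sub_re] at h0
    linarith
  have hCS : -(C.trace.re) ≤ ((C * S).trace).re := by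
    have h0 : 0 ≤ ((C * (1 + S)).trace).re := re_trace_mul_nonneg_of_psd hC hS2
    rw [Matrix.mul_add, Matrix.mul_one, Matrix.trace_add, Complex.add_re] at h0
    linarith
  have hsplit : ((A * S).trace).re = ((B * S).trace).re - ((C * S).trace).re := by
    rw [hABC, Matrix.sub_mul, Matrix.trace_sub, Complex.sub_re]
  have hfin : traceNorm A = ((A * S).trace).re := by
    rw [htn, hAS, hMdef, htr, Complex.re_sum]
    simp
  rw [hfin, hsplit]
  linarith

end TraceNorm

section Blocks
variable {ι : Type*} [Fintype ι] [DecidableEq ι]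

lemma vnorm_sub_le (v w : ι → ℂ) : vnorm (v - w) ≤ vnorm v + vnorm w := by
  rw [vnorm_eq, vnorm_eq, vnorm_eq, toE_sub]; exact norm_sub_le _ _

lemma trace_fromBlocks' (A : Matrix Unit Unit ℂ) (B : Matrix Unit ι ℂ)
    (C : Matrix ι Unit ℂ) (D : Matrix ι ι ℂ) :
    (Matrix.fromBlocks A B C D).trace = A.trace + D.trace := by
  simp [Matrix.trace, Matrix.diag, Fintype.sum_sum_type, Matrix.fromBlocks]

lemma psd_fromBlocks {A : Matrix Unit Unit ℂ} {D : Matrix ι ι ℂ}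
    (hA : A.PosSemidef) (hD : D.PosSemidef) :
    (Matrix.fromBlocks A 0 0 D).PosSemidef := by
  refine Matrix.PosSemidef.of_dotProduct_mulVec_nonneg ?_ ?_
  · unfold Matrix.IsHermitian
    rw [Matrix.fromBlocks_conjTranspose, hA.1.eq, hD.1.eq]
    simp
  · intro x
    have hx : x = Sum.elim (x ∘ Sum.inl) (x ∘ Sum.inr) := by
      funext p; cases p <;> rfl
    rw [hx, Matrix.fromBlocks_mulVec]
    have hs : star (Sum.elim (x ∘ Sum.inl) (x ∘ Sum.inr))
        = Sum.elim (star (x ∘ Sum.inl)) (star (x ∘ Sum.inr)) := by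
      funext p; cases p <;> rfl
    rw [hs]
    rw [sumElim_dotProduct_sumElim]
    have h1 := hA.dotProduct_mulVec_nonneg (x ∘ Sum.inl)
    have h2 := hD.dotProduct_mulVec_nonneg (x ∘ Sum.inr)
    simp only [Matrix.zero_mulVec, add_zero, zero_add]
    exact add_nonneg h1 h2

lemma fromBlocks_sub' (A A' : Matrix Unit Unit ℂ) (D D' : Matrix ι ι ℂ) :
    Matrix.fromBlocks A 0 0 D - Matrix.fromBlocks A' 0 0 D'
      = Matrix.fromBlocks (A - A') 0 0 (D - D') := by
  rw [sub_eq_add_neg, Matrix.fromBlocks_neg, Matrix.fromBlocks_add]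
  simp [sub_eq_add_neg]

/-- The key algebraic decomposition of a difference of rank-one projectors. -/
lemma outer_decomp (s : ℝ) (hs : 0 < s) (x y : ι → ℂ) :
    outer x x - outer y y =
      (((s/2 : ℝ)) : ℂ) • outer (x+y) (x+y) + (((1/(2*s) : ℝ)) : ℂ) • outer (x-y) (x-y)
      - (((1/(2*s) : ℝ)) : ℂ) • outer ((s:ℂ) • (x+y) - (x-y)) ((s:ℂ) • (x+y) - (x-y)) := by
  ext i j
  simp only [outer, Matrix.sub_apply, Matrix.add_apply, Matrix.smul_apply, Matrix.of_apply,
    Pi.add_apply, Pi.sub_apply, Pi.smul_apply, smul_eq_mul, map_sub, map_add, map_mul,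
    Complex.conj_ofReal]
  have hs' : (s : ℂ) ≠ 0 := by
    simp only [ne_eq, Complex.ofReal_eq_zero]
    exact ne_of_gt hs
  push_cast
  field_simp
  ring

lemma trace_smul_one_unit (c : ℝ) :
    (((c : ℂ) • (1 : Matrix Unit Unit ℂ)).trace).re = c := by
  simp [Matrix.trace_smul, Matrix.trace_one]

open scoped MatrixOrder in
lemma traceNorm_zero : traceNorm (0 : Matrix ι ι ℂ) = 0 := by
  rw [traceNorm_eq_sqrt]
  simp

end Blocks

section NumHelpers

lemma num_le_one_of_pyth {a b : ℝ} (ha : 0 ≤ a) (hb : 0 ≤ b)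
    (h : (1:ℝ) ^ 2 = a ^ 2 + b ^ 2) : a ≤ 1 := by nlinarith

lemma num_sq_le {w : ℝ} (h0 : 0 ≤ w) (h2 : w ≤ 2) : w ^ 2 ≤ 4 := by nlinarith

lemma num_eq_zero_of_sq_nonpos {a : ℝ} (h0 : 0 ≤ a) (h : a ^ 2 ≤ 0) : a = 0 := by nlinarith

lemma num_abs_sq_diff_le {nx ny nb : ℝ} (hx1 : nx ≤ 1) (hy1 : ny ≤ 1)
    (hnx : 0 ≤ nx) (hny : 0 ≤ ny) (h : |ny - nx| ≤ nb) : |ny ^ 2 - nx ^ 2| ≤ 2 * nb := by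
  have h6 := abs_le.mp h
  rw [abs_le]
  constructor <;> nlinarith

lemma num_sqrt_bound {u : ℝ} (hu0 : 0 ≤ u) (h : u ^ 2 < 1 / 36) : u < 1 / 6 := by nlinarith

lemma num_small_t {t : ℝ} (ht : 0 < t) (h6 : t ^ 2 < 1 / 6) :
    8 * t ^ 2 + 4 * t ^ 3 ≤ 4 * t := by
  nlinarith [sq_nonneg (t - 5/12), mul_pos ht ht]

end NumHelpers

set_option maxHeartbeats 1000000 in
/-- Extract-and-simulate core: the experiment `E` appends the ancilla `|0^n⟩`,
measures the orthogonal projection `P`, outputs `Fail` on reject and the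
post-measurement state on accept; its output is the density matrix
`(1−p_b)·|Fail⟩⟨Fail| ⊕ P(φ_b⊗0)⟨φ_b⊗0|P`.  If each `φ_b` decomposes as
`φ_{b,<} + φ_{b,≥}` along orthogonal subspaces `S₁ ⟂ S₂`, every state in `S₁`
is accepted with probability at most `η < 1/36` of its squared norm, and
`φ_{0,≥} = φ_{1,≥}`, then the two output distributions are within trace
distance `4·η^{1/4}`. -/
theorem extract_and_simulate_core {d a : ℕ} (a0 : Fin a)
    (P : Matrix (Fin d × Fin a) (Fin d × Fin a) ℂ)
    (hPh : P.IsHermitian) (hP2 : P * P = P)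
    (S1 S2 : Submodule ℂ (Fin d → ℂ))
    (horth : ∀ x ∈ S1, ∀ y ∈ S2, cinner x y = 0)
    (η : ℝ) (hη0 : 0 ≤ η) (hη : η < 1 / 36)
    (hfail : ∀ ψ ∈ S1, vnorm (P.mulVec (embAnc a0 ψ)) ^ 2 ≤ η * vnorm ψ ^ 2)
    (φ0l φ1l φg : Fin d → ℂ)
    (h0l : φ0l ∈ S1) (h1l : φ1l ∈ S1) (hg : φg ∈ S2)
    (hu0 : vnorm (φ0l + φg) = 1) (hu1 : vnorm (φ1l + φg) = 1) :
    (1 / 2) * traceNorm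
        (Matrix.fromBlocks
            (((1 - vnorm (P.mulVec (embAnc a0 (φ0l + φg))) ^ 2 : ℝ) : ℂ)
              • (1 : Matrix Unit Unit ℂ)) 0 0
            (outer (P.mulVec (embAnc a0 (φ0l + φg))) (P.mulVec (embAnc a0 (φ0l + φg))))
          -
          Matrix.fromBlocks
            (((1 - vnorm (P.mulVec (embAnc a0 (φ1l + φg))) ^ 2 : ℝ) : ℂ)
              • (1 : Matrix Unit Unit ℂ)) 0 0
            (outer (P.mulVec (embAnc a0 (φ1l + φg))) (P.mulVec (embAnc a0 (φ1l + φg)))))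
      ≤ 4 * η ^ ((1 : ℝ) / 4) := by
  set x := P.mulVec (embAnc a0 (φ0l + φg)) with hxdef
  set y := P.mulVec (embAnc a0 (φ1l + φg)) with hydef
  have hx1 : vnorm x ≤ 1 := by
    calc vnorm x ≤ vnorm (embAnc a0 (φ0l + φg)) := vnorm_proj_le hPh hP2 _
      _ = vnorm (φ0l + φg) := vnorm_embAnc _ _
      _ = 1 := hu0
  have hy1 : vnorm y ≤ 1 := by
    calc vnorm y ≤ vnorm (embAnc a0 (φ1l + φg)) := vnorm_proj_le hPh hP2 _
      _ = vnorm (φ1l + φg) := vnorm_embAnc _ _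
      _ = 1 := hu1
  have h0le : vnorm φ0l ≤ 1 := by
    have hpy := vnorm_add_sq_of_orth (horth φ0l h0l φg hg)
    rw [hu0] at hpy
    exact num_le_one_of_pyth (vnorm_nonneg _) (vnorm_nonneg _) (by rw [hpy])
  have h1le : vnorm φ1l ≤ 1 := by
    have hpy := vnorm_add_sq_of_orth (horth φ1l h1l φg hg)
    rw [hu1] at hpy
    exact num_le_one_of_pyth (vnorm_nonneg _) (vnorm_nonneg _) (by rw [hpy])
  have hxy : x - y = P.mulVec (embAnc a0 (φ0l - φ1l)) := by
    rw [hxdef, hydef, ← Matrix.mulVec_sub, ← embAnc_sub]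
    congr 2
    abel
  set u := Real.sqrt η with hudef
  have hu0' : 0 ≤ u := Real.sqrt_nonneg _
  have hu2 : u ^ 2 = η := Real.sq_sqrt hη0
  have hblt : vnorm (x - y) ^ 2 ≤ 4 * η := by
    rw [hxy]
    have hf := hfail (φ0l - φ1l) (S1.sub_mem h0l h1l)
    have hle2 : vnorm (φ0l - φ1l) ≤ 2 := (vnorm_sub_le _ _).trans (by linarith)
    have hw : vnorm (φ0l - φ1l) ^ 2 ≤ 4 := num_sq_le (vnorm_nonneg _) hle2
    have h9 := mul_le_mul_of_nonneg_left hw hη0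
    linarith
  have hb : vnorm (x - y) ≤ 2 * u := by
    have h1 : Real.sqrt (vnorm (x - y) ^ 2) ≤ Real.sqrt (4 * η) := Real.sqrt_le_sqrt hblt
    rw [Real.sqrt_sq (vnorm_nonneg _)] at h1
    have h2 : Real.sqrt (4 * η) = 2 * u := by
      rw [hudef, show (4:ℝ) * η = 2 ^ 2 * η by ring, Real.sqrt_mul (by positivity),
        Real.sqrt_sq (by norm_num)]
    linarith
  set r := vnorm y ^ 2 - vnorm x ^ 2 with hrdef
  have hrabs : |r| ≤ 2 * vnorm (x - y) := by
    have h5 : |vnorm y - vnorm x| ≤ vnorm (x - y) := by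
      rw [vnorm_eq x, vnorm_eq y, vnorm_eq (x - y), toE_sub]
      rw [norm_sub_rev]
      exact abs_norm_sub_norm_le (toE y) (toE x)
    rw [hrdef]
    exact num_abs_sq_diff_le hx1 hy1 (vnorm_nonneg _) (vnorm_nonneg _) h5
  rcases eq_or_lt_of_le hη0 with hz | hpos
  · -- η = 0 : the two states coincide
    have hb0 : vnorm (x - y) = 0 :=
      num_eq_zero_of_sq_nonpos (vnorm_nonneg _) (by rw [← hz] at hblt; linarith)
    have hxy0 : x = y := by
      have h7 := vnorm_eq_zero hb0
      rwa [sub_eq_zero] at h7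
    rw [hxy0, sub_self, traceNorm_zero, ← hz, Real.zero_rpow (by norm_num)]
    norm_num
  · -- main case
    set t := Real.sqrt u with htdef
    have hupos : 0 < u := Real.sqrt_pos.mpr hpos
    have htpos : 0 < t := Real.sqrt_pos.mpr hupos
    have ht2 : t ^ 2 = u := Real.sq_sqrt hu0'
    have hu6 : u < 1 / 6 := num_sqrt_bound hu0' (by rw [hu2]; exact hη)
    have hrpow : η ^ ((1:ℝ) / 4) = t := by
      rw [htdef, hudef, Real.sqrt_eq_rpow, Real.sqrt_eq_rpow, ← Real.rpow_mul hη0]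
      norm_num
    rw [hrpow]
    set aa := x + y with haadef
    set bb := x - y with hbbdef
    set g := (t : ℂ) • aa - bb with hgdef
    set na := vnorm aa with hnadef
    set nb := vnorm bb with hnbdef
    set ng := vnorm g with hngdef
    have hna0 : 0 ≤ na := vnorm_nonneg _
    have hnb0 : 0 ≤ nb := vnorm_nonneg _
    have hng0 : 0 ≤ ng := vnorm_nonneg _
    have hna : na ≤ 2 := (vnorm_add_le x y).trans (by linarith)
    have hnb : nb ≤ 2 * t ^ 2 := by rw [ht2]; exact hb
    have hng : ng ≤ t * na + nb := by
      calc ng ≤ vnorm ((t : ℂ) • aa) + vnorm bb := by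
            rw [hngdef, hgdef]; exact vnorm_sub_le _ _
        _ = t * na + nb := by rw [vnorm_smul_real, abs_of_pos htpos]
    set B1 := ((max r 0 : ℝ) : ℂ) • (1 : Matrix Unit Unit ℂ) with hB1def
    set C1 := ((max (-r) 0 : ℝ) : ℂ) • (1 : Matrix Unit Unit ℂ) with hC1def
    set B2 := ((t/2 : ℝ) : ℂ) • outer aa aa + ((1/(2*t) : ℝ) : ℂ) • outer bb bb with hB2def
    set C2 := ((1/(2*t) : ℝ) : ℂ) • outer g g with hC2def
    set B := Matrix.fromBlocks B1 0 0 B2 with hBdef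
    set C := Matrix.fromBlocks C1 0 0 C2 with hCdef
    have hBpsd : B.PosSemidef :=
      psd_fromBlocks (psd_smul_real Matrix.PosSemidef.one (le_max_right r 0))
        ((psd_smul_real (psd_outer_self aa) (by positivity)).add
          (psd_smul_real (psd_outer_self bb) (by positivity)))
    have hCpsd : C.PosSemidef :=
      psd_fromBlocks (psd_smul_real Matrix.PosSemidef.one (le_max_right (-r) 0))
        (psd_smul_real (psd_outer_self g) (by positivity))
    have hmax : max r 0 - max (-r) 0 = r := by
      rcases le_total 0 r with h | h
      · rw [max_eq_left h, max_eq_right (neg_nonpos.mpr h)]; ring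
      · rw [max_eq_right h, max_eq_left (neg_nonneg.mpr h)]; ring
    have hD : Matrix.fromBlocks
          (((1 - vnorm x ^ 2 : ℝ) : ℂ) • (1 : Matrix Unit Unit ℂ)) 0 0 (outer x x)
        - Matrix.fromBlocks
          (((1 - vnorm y ^ 2 : ℝ) : ℂ) • (1 : Matrix Unit Unit ℂ)) 0 0 (outer y y)
        = B - C := by
      rw [hBdef, hCdef, fromBlocks_sub', fromBlocks_sub']
      have hsc : ((1 - vnorm x ^ 2 : ℝ) : ℂ) • (1 : Matrix Unit Unit ℂ)
          - ((1 - vnorm y ^ 2 : ℝ) : ℂ) • (1 : Matrix Unit Unit ℂ) = B1 - C1 := by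
        rw [hB1def, hC1def, ← sub_smul, ← sub_smul, ← Complex.ofReal_sub,
          ← Complex.ofReal_sub]
        have hr2 : (1 - vnorm x ^ 2) - (1 - vnorm y ^ 2) = max r 0 - max (-r) 0 := by
          rw [hmax, hrdef]; ring
        rw [hr2]
      have hbl : outer x x - outer y y = B2 - C2 := by
        rw [hB2def, hC2def]
        have hod := outer_decomp t htpos x y
        rw [← haadef, ← hbbdef, ← hgdef] at hod
        rw [hod]
      rw [hsc, hbl]
    have hkey := traceNorm_le_of_psd_decomp hBpsd hCpsd hD
    have hB2tr : B2.trace.re = (t/2) * na ^ 2 + (1/(2*t)) * nb ^ 2 := by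
      rw [hB2def, Matrix.trace_add, Complex.add_re, Matrix.trace_smul, Matrix.trace_smul,
        trace_outer_self, trace_outer_self, ← hnadef, ← hnbdef]
      rw [smul_eq_mul, smul_eq_mul, ← Complex.ofReal_mul, ← Complex.ofReal_mul,
        Complex.ofReal_re, Complex.ofReal_re]
    have hC2tr : C2.trace.re = (1/(2*t)) * ng ^ 2 := by
      rw [hC2def, Matrix.trace_smul, trace_outer_self, ← hngdef]
      rw [smul_eq_mul, ← Complex.ofReal_mul, Complex.ofReal_re]
    have htrB : B.trace.re = max r 0 + ((t/2) * na ^ 2 + (1/(2*t)) * nb ^ 2) := by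
      rw [hBdef, trace_fromBlocks', Complex.add_re, hB1def, trace_smul_one_unit, hB2tr]
    have htrC : C.trace.re = max (-r) 0 + (1/(2*t)) * ng ^ 2 := by
      rw [hCdef, trace_fromBlocks', Complex.add_re, hC1def, trace_smul_one_unit, hC2tr]
    have hmaxsum : max r 0 + max (-r) 0 = |r| := by
      rcases le_total 0 r with h | h
      · rw [max_eq_left h, max_eq_right (neg_nonpos.mpr h), abs_of_nonneg h]; ring
      · rw [max_eq_right h, max_eq_left (neg_nonneg.mpr h), abs_of_nonpos h]; ring
    have habs' : |r| ≤ 4 * t ^ 2 := by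
      calc |r| ≤ 2 * nb := hrabs
        _ ≤ 4 * t ^ 2 := by linarith
    have hna4 : na ^ 2 ≤ 4 := num_sq_le hna0 hna
    have e1 : (t/2) * na ^ 2 ≤ 2 * t := by
      calc (t/2) * na ^ 2 ≤ (t/2) * 4 :=
            mul_le_mul_of_nonneg_left hna4 (by positivity)
        _ = 2 * t := by ring
    have e2 : (1/(2*t)) * nb ^ 2 ≤ 2 * t ^ 3 := by
      have hsq : nb ^ 2 ≤ (2 * t ^ 2) ^ 2 := pow_le_pow_left₀ hnb0 hnb 2
      have hpos2 : 0 < 1/(2*t) := by positivity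
      calc (1/(2*t)) * nb ^ 2 ≤ (1/(2*t)) * (2 * t ^ 2) ^ 2 :=
            mul_le_mul_of_nonneg_left hsq hpos2.le
        _ = 2 * t ^ 3 := by field_simp
    have e3 : ng ≤ 2 * t + 2 * t ^ 2 := by
      have h10 : t * na ≤ t * 2 := mul_le_mul_of_nonneg_left hna htpos.le
      linarith
    have e4 : (1/(2*t)) * ng ^ 2 ≤ 2 * t + 4 * t ^ 2 + 2 * t ^ 3 := by
      have hsq : ng ^ 2 ≤ (2 * t + 2 * t ^ 2) ^ 2 := pow_le_pow_left₀ hng0 e3 2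
      have hpos2 : 0 < 1/(2*t) := by positivity
      calc (1/(2*t)) * ng ^ 2 ≤ (1/(2*t)) * (2 * t + 2 * t ^ 2) ^ 2 :=
            mul_le_mul_of_nonneg_left hsq hpos2.le
        _ = 2 * t + 4 * t ^ 2 + 2 * t ^ 3 := by field_simp; ring
    have hfinal : max r 0 + ((t/2) * na ^ 2 + (1/(2*t)) * nb ^ 2)
        + (max (-r) 0 + (1/(2*t)) * ng ^ 2) ≤ 8 * t := by
      have hq : 8 * t ^ 2 + 4 * t ^ 3 ≤ 4 * t :=
        num_small_t htpos (by rw [ht2]; exact hu6)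
      have h8 : |r| + ((t/2) * na ^ 2 + (1/(2*t)) * nb ^ 2) + (1/(2*t)) * ng ^ 2
          ≤ 8 * t := by linarith
      linarith [hmaxsum.symm.le]
    rw [htrB, htrC] at hkey
    linarith

end
end

section
/- Let P and Q be orthogonal projections on a finite-dimensional Hilbert space H. Then H decomposes into an orthogonal direct sum of subspaces each of dimension at most 2, each invariant under both P and Q. -/
open Module

/-- Existence of a small nonzero invariant subspace. -/
lemma jordan_exists_invariant {H : Type*} [NormedAddCommGroup H] [InnerProductSpace ℂ H]
    [FiniteDimensional ℂ H] [Nontrivial H]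
    (P Q : H →ₗ[ℂ] H) (hP2 : P ∘ₗ P = P) (hQ2 : Q ∘ₗ Q = Q) :
    ∃ W : Submodule ℂ H, W ≠ ⊥ ∧ Module.finrank ℂ W ≤ 2 ∧
      ∀ x ∈ W, P x ∈ W ∧ Q x ∈ W := by
  have hP2' : ∀ x, P (P x) = P x := fun x => congrFun (congrArg DFunLike.coe hP2) x
  have hQ2' : ∀ x, Q (Q x) = Q x := fun x => congrFun (congrArg DFunLike.coe hQ2) x
  by_cases hP : P = 0
  · -- P = 0 : take an eigenvector of Q
    obtain ⟨μ, hμ⟩ := Module.End.exists_eigenvalue (Q : Module.End ℂ H)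
    obtain ⟨v, hv⟩ := hμ.exists_hasEigenvector
    have hv0 : v ≠ 0 := hv.2
    refine ⟨ℂ ∙ v, by simpa [Submodule.span_singleton_eq_bot] using hv0, ?_, ?_⟩
    · rw [finrank_span_singleton hv0]; omega
    · intro x hx
      obtain ⟨c, rfl⟩ := Submodule.mem_span_singleton.mp hx
      constructor
      · simp [hP]
      · have : Q (c • v) = (c * μ) • v := by
          rw [map_smul, hv.apply_eq_smul, smul_smul]
        rw [this]
        exact Submodule.smul_mem _ _ (Submodule.mem_span_singleton_self v)
  · -- P ≠ 0 : eigenvector of P∘Q restricted to range P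
    obtain ⟨u, hu⟩ : ∃ u, P u ≠ 0 := by
      by_contra h
      push_neg at h
      exact hP (LinearMap.ext fun x => by simp [h])
    haveI : Nontrivial (LinearMap.range P) :=
      nontrivial_of_ne ⟨P u, LinearMap.mem_range_self P u⟩ 0
        (fun h => hu (by simpa [Subtype.ext_iff] using h))
    have hPQmem : ∀ x ∈ LinearMap.range P, (P ∘ₗ Q) x ∈ LinearMap.range P := by
      intro x _
      exact LinearMap.mem_range_self P (Q x)
    set A : LinearMap.range P →ₗ[ℂ] LinearMap.range P := (P ∘ₗ Q).restrict hPQmem with hA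
    obtain ⟨μ, hμ⟩ := Module.End.exists_eigenvalue (A : Module.End ℂ (LinearMap.range P))
    obtain ⟨w, hw⟩ := hμ.exists_hasEigenvector
    set v : H := (w : H) with hvdef
    have hv0 : v ≠ 0 := fun h => hw.2 (Subtype.ext h)
    have hPv : P v = v := by
      obtain ⟨y, hy⟩ := w.2
      rw [hvdef, ← hy, hP2']
    have hPQv : P (Q v) = μ • v := by
      have := congrArg (Subtype.val) hw.apply_eq_smul
      simpa [hA, LinearMap.restrict_coe_apply] using this
    refine ⟨Submodule.span ℂ {v, Q v}, ?_, ?_, ?_⟩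
    · intro h
      have : v ∈ Submodule.span ℂ ({v, Q v} : Set H) :=
        Submodule.subset_span (by simp)
      rw [h, Submodule.mem_bot] at this
      exact hv0 this
    · classical
      refine (finrank_span_le_card _).trans ?_
      rw [Set.toFinset_insert, Set.toFinset_singleton]
      refine (Finset.card_insert_le _ _).trans ?_
      simp
    · intro x hx
      obtain ⟨a, b, rfl⟩ := Submodule.mem_span_pair.mp hx
      have hvmem : v ∈ Submodule.span ℂ ({v, Q v} : Set H) :=
        Submodule.subset_span (by simp)
      have hQvmem : Q v ∈ Submodule.span ℂ ({v, Q v} : Set H) :=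
        Submodule.subset_span (by simp)
      constructor
      · have : P (a • v + b • Q v) = (a + b * μ) • v := by
          simp [map_add, map_smul, hPv, hPQv, smul_smul, add_smul]
        rw [this]
        exact Submodule.smul_mem _ _ hvmem
      · have : Q (a • v + b • Q v) = (a + b) • Q v := by
          simp [map_add, map_smul, hQ2', add_smul]
        rw [this]
        exact Submodule.smul_mem _ _ hQvmem

/-- The trivial case. -/
lemma jordan_triv {H : Type*} [NormedAddCommGroup H] [InnerProductSpace ℂ H]
    [Subsingleton H] (P Q : H →ₗ[ℂ] H) :
    ∃ (n : ℕ) (V : Fin n → Submodule ℂ H),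
      (∀ i j, i ≠ j → ∀ x ∈ V i, ∀ y ∈ V j, (inner ℂ x y : ℂ) = 0) ∧
      (⨆ i, V i) = ⊤ ∧
      (∀ i, Module.finrank ℂ (V i) ≤ 2) ∧
      (∀ i, ∀ x ∈ V i, P x ∈ V i ∧ Q x ∈ V i) := by
  refine ⟨0, Fin.elim0, fun i => i.elim0, ?_, fun i => i.elim0, fun i => i.elim0⟩
  refine le_antisymm le_top ?_
  intro x _
  rw [Subsingleton.elim x 0]
  exact zero_mem _

lemma jordan_aux (n : ℕ) : ∀ {H : Type*} [NormedAddCommGroup H] [InnerProductSpace ℂ H]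
    [FiniteDimensional ℂ H]
    (P Q : H →ₗ[ℂ] H),
    (P ∘ₗ P = P) → (∀ x y : H, (inner ℂ (P x) y : ℂ) = inner ℂ x (P y)) →
    (Q ∘ₗ Q = Q) → (∀ x y : H, (inner ℂ (Q x) y : ℂ) = inner ℂ x (Q y)) →
    Module.finrank ℂ H ≤ n →
    ∃ (m : ℕ) (V : Fin m → Submodule ℂ H),
      (∀ i j, i ≠ j → ∀ x ∈ V i, ∀ y ∈ V j, (inner ℂ x y : ℂ) = 0) ∧
      (⨆ i, V i) = ⊤ ∧
      (∀ i, Module.finrank ℂ (V i) ≤ 2) ∧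
      (∀ i, ∀ x ∈ V i, P x ∈ V i ∧ Q x ∈ V i) := by
  induction n with
  | zero =>
    intro H _ _ _ P Q hP2 hPsa hQ2 hQsa hn
    haveI : Subsingleton H := Module.finrank_zero_iff.mp (Nat.le_zero.mp hn)
    exact jordan_triv P Q
  | succ n ih =>
    intro H _ _ _ P Q hP2 hPsa hQ2 hQsa hn
    by_cases hs : Subsingleton H
    · exact jordan_triv P Q
    haveI : Nontrivial H := not_subsingleton_iff_nontrivial.mp hs
    obtain ⟨W, hWbot, hWrank, hWinv⟩ := jordan_exists_invariant P Q hP2 hQ2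
    set K := Wᗮ with hK
    have hPK : ∀ x ∈ K, P x ∈ K := by
      intro x hx
      rw [hK, Submodule.mem_orthogonal] at hx ⊢
      intro u hu
      rw [← hPsa]
      exact hx (P u) (hWinv u hu).1
    have hQK : ∀ x ∈ K, Q x ∈ K := by
      intro x hx
      rw [hK, Submodule.mem_orthogonal] at hx ⊢
      intro u hu
      rw [← hQsa]
      exact hx (Q u) (hWinv u hu).2
    set P' : K →ₗ[ℂ] K := P.restrict hPK with hP'
    set Q' : K →ₗ[ℂ] K := Q.restrict hQK with hQ'
    have hP2' : ∀ x, P (P x) = P x := fun x => congrFun (congrArg DFunLike.coe hP2) x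
    have hQ2' : ∀ x, Q (Q x) = Q x := fun x => congrFun (congrArg DFunLike.coe hQ2) x
    have hP'2 : P' ∘ₗ P' = P' := by
      apply LinearMap.ext
      intro x
      apply Subtype.ext
      simp [hP', LinearMap.restrict_coe_apply, hP2']
    have hQ'2 : Q' ∘ₗ Q' = Q' := by
      apply LinearMap.ext
      intro x
      apply Subtype.ext
      simp [hQ', LinearMap.restrict_coe_apply, hQ2']
    have hP'sa : ∀ x y : K, (inner ℂ (P' x) y : ℂ) = inner ℂ x (P' y) := by
      intro x y
      rw [Submodule.coe_inner, Submodule.coe_inner, hP', LinearMap.restrict_coe_apply,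
        LinearMap.restrict_coe_apply]
      exact hPsa x y
    have hQ'sa : ∀ x y : K, (inner ℂ (Q' x) y : ℂ) = inner ℂ x (Q' y) := by
      intro x y
      rw [Submodule.coe_inner, Submodule.coe_inner, hQ', LinearMap.restrict_coe_apply,
        LinearMap.restrict_coe_apply]
      exact hQsa x y
    have hsum : Module.finrank ℂ W + Module.finrank ℂ K = Module.finrank ℂ H :=
      W.finrank_add_finrank_orthogonal
    have hWpos : 0 < Module.finrank ℂ W := by
      haveI : Nontrivial W := Submodule.nontrivial_iff_ne_bot.mpr hWbot
      exact Module.finrank_pos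
    have hKn : Module.finrank ℂ K ≤ n := by omega
    obtain ⟨m, V', horth', htop', hrank', hinv'⟩ := ih P' Q' hP'2 hP'sa hQ'2 hQ'sa hKn
    refine ⟨m + 1, Fin.cons W (fun i => (V' i).map K.subtype), ?_, ?_, ?_, ?_⟩
    · -- orthogonality
      intro i j hij x hx y hy
      have key : ∀ (a b : H), a ∈ W → b ∈ K → (inner ℂ a b : ℂ) = 0 := by
        intro a b ha hb
        exact (Submodule.mem_orthogonal W b).mp hb a ha
      rcases Fin.eq_zero_or_eq_succ i with rfl | ⟨i', rfl⟩ <;>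
        rcases Fin.eq_zero_or_eq_succ j with rfl | ⟨j', rfl⟩
      · exact absurd rfl hij
      · rw [Fin.cons_zero] at hx
        rw [Fin.cons_succ] at hy
        exact key x y hx (Submodule.map_subtype_le K (V' j') hy)
      · rw [Fin.cons_succ] at hx
        rw [Fin.cons_zero] at hy
        exact inner_eq_zero_symm.mpr (key y x hy (Submodule.map_subtype_le K (V' i') hx))
      · rw [Fin.cons_succ] at hx hy
        obtain ⟨x', hx', rfl⟩ := hx
        obtain ⟨y', hy', rfl⟩ := hy
        have hij' : i' ≠ j' := fun h => hij (by rw [h])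
        have := horth' i' j' hij' x' hx' y' hy'
        rwa [Submodule.coe_inner] at this
    · -- supremum is top
      set V : Fin (m + 1) → Submodule ℂ H := Fin.cons W (fun i => (V' i).map K.subtype)
        with hV
      refine le_antisymm le_top ?_
      rw [← Submodule.sup_orthogonal_of_hasOrthogonalProjection (K := W)]
      apply sup_le
      · calc W = V 0 := by rw [hV, Fin.cons_zero]
          _ ≤ ⨆ i, V i := le_iSup V 0
      · have hKeq : K = ⨆ i, (V' i).map K.subtype := by
          rw [← Submodule.map_iSup, htop', Submodule.map_top, Submodule.range_subtype]
        rw [← hK, hKeq]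
        apply iSup_le
        intro i
        calc (V' i).map K.subtype = V i.succ := by rw [hV, Fin.cons_succ]
          _ ≤ ⨆ j, V j := le_iSup V i.succ
    · -- finrank bound
      intro i
      rcases Fin.eq_zero_or_eq_succ i with rfl | ⟨i', rfl⟩
      · rw [Fin.cons_zero]; exact hWrank
      · rw [Fin.cons_succ, Submodule.finrank_map_subtype_eq]
        exact hrank' i'
    · -- invariance
      intro i x hx
      rcases Fin.eq_zero_or_eq_succ i with rfl | ⟨i', rfl⟩
      · rw [Fin.cons_zero] at hx ⊢
        exact hWinv x hx
      · rw [Fin.cons_succ] at hx ⊢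
        obtain ⟨x', hx', rfl⟩ := hx
        constructor
        · refine ⟨P' x', (hinv' i' x' hx').1, ?_⟩
          rw [Submodule.subtype_apply, hP', LinearMap.restrict_coe_apply]
          rfl
        · refine ⟨Q' x', (hinv' i' x' hx').2, ?_⟩
          rw [Submodule.subtype_apply, hQ', LinearMap.restrict_coe_apply]
          rfl

/-- Jordan's lemma: for two orthogonal projections `P, Q` on a finite-dimensional
Hilbert space `H`, the space decomposes into an orthogonal direct sum of
subspaces of dimension at most `2`, each invariant under both `P` and `Q`. -/
theorem jordan_lemma {H : Type*} [NormedAddCommGroup H] [InnerProductSpace ℂ H]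
    [FiniteDimensional ℂ H]
    (P Q : H →ₗ[ℂ] H)
    (hP2 : P ∘ₗ P = P) (hPsa : ∀ x y : H, (inner ℂ (P x) y : ℂ) = inner ℂ x (P y))
    (hQ2 : Q ∘ₗ Q = Q) (hQsa : ∀ x y : H, (inner ℂ (Q x) y : ℂ) = inner ℂ x (Q y)) :
    ∃ (n : ℕ) (V : Fin n → Submodule ℂ H),
      (∀ i j, i ≠ j → ∀ x ∈ V i, ∀ y ∈ V j, (inner ℂ x y : ℂ) = 0) ∧
      (⨆ i, V i) = ⊤ ∧
      (∀ i, Module.finrank ℂ (V i) ≤ 2) ∧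
      (∀ i, ∀ x ∈ V i, P x ∈ V i ∧ Q x ∈ V i) := by
  exact jordan_aux (Module.finrank ℂ H) P Q hP2 hPsa hQ2 hQsa le_rfl
end
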